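/- arXiv:2103.05049 — 12 statements merged into one kernel-verified Lean document; each statement's English description precedes it below -/
import Mathlib

section
/- For all natural numbers r, k, d ≥ 1 there exists a number W(r, k, d) ∈ ℕ such that for every colouring of ℤ^d with r colours and every N ≥ W(r, k, d), there exist positive integers k₁, …, k_d and integers l₁, …, l_d such that the d-dimensional grid of depth k, [k₁,…,k_d; l₁,…,l_d; k] := {(l₁ + m₁k₁, l₂ + m₂k₂, …, l_d + m_dk_d) : m₁,…,m_d ∈ {0,1,…,k}}, is contained in {0,1,…,N}^d and is monochromatic (all its points receive the same colour). -/
open Combinatorics Finset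

/-!
Apply the Hales–Jewett theorem to the alphabet `{0,…,k}^d` and colour a word `w : ι → {0,…,k}^d`
by the colour of the sum of its letters, a point of `{0, …, k |ι|}^d`. The letters of a point
`l x` of a combinatorial line are `x` on the active coordinates and fixed elsewhere, so summing
maps the line onto a grid of depth `k` whose common step is the number of active coordinates.
-/

theorem Combinatorics.Line.sum_comp_apply {α ι M : Type*} [Fintype ι] [AddCommMonoid M]
    (l : Line α ι) (f : α → M) (x : α) :
    ∑ t, f (l x t) = ∑ t, (l.idxFun t).elim 0 f + #{t | l.idxFun t = none} • f x := by
  have hsplit : ∀ t, f (l x t) =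
      (l.idxFun t).elim 0 f + if l.idxFun t = none then f x else 0 := by
    intro t
    cases h : l.idxFun t <;> simp [h]
  rw [sum_congr rfl fun t _ => hsplit t, sum_add_distrib, ← sum_filter, sum_const]

theorem sum_fin_val_le_mul_card {ι : Type*} [Fintype ι] (k : ℕ) (w : ι → Fin (k + 1)) :
    ∑ t, (w t : ℕ) ≤ k * Fintype.card ι := by
  calc ∑ t, (w t : ℕ) ≤ ∑ _t : ι, k := sum_le_sum fun t _ => (w t).is_le
    _ = k * Fintype.card ι := by rw [sum_const, card_univ, smul_eq_mul, mul_comm]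

theorem stmt_1_general (r k d : ℕ) :
    ∃ W : ℕ, ∀ (χ : (Fin d → ℤ) → Fin r) (N : ℕ), W ≤ N →
      ∃ kv lv : Fin d → ℤ,
        (∀ i, 0 < kv i) ∧
        (∀ m : Fin d → ℕ, (∀ i, m i ≤ k) →
          ∀ i, 0 ≤ lv i + (m i : ℤ) * kv i ∧ lv i + (m i : ℤ) * kv i ≤ (N : ℤ)) ∧
        ∃ c : Fin r, ∀ m : Fin d → ℕ, (∀ i, m i ≤ k) →
          χ (fun i => lv i + (m i : ℤ) * kv i) = c := by
  obtain ⟨ι, _, hι⟩ := Line.exists_mono_in_high_dimension (Fin d → Fin (k + 1)) (Fin r)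
  let f : (Fin d → Fin (k + 1)) → Fin d → ℕ := fun x i => x i
  refine ⟨k * Fintype.card ι, fun χ N hN => ?_⟩
  obtain ⟨l, c, hc⟩ := hι fun w => χ fun i => ((∑ t, f (w t)) i : ℤ)
  set s := #{t | l.idxFun t = none}
  have hs : 0 < s := card_pos.2 ⟨_, mem_filter.2 ⟨mem_univ _, l.proper.choose_spec⟩⟩
  set b := ∑ t, (l.idxFun t).elim 0 f
  have hgrid : ∀ m : Fin d → ℕ, (hm : ∀ i, m i ≤ k) → ∀ i,
      (b i : ℤ) + m i * s = ((∑ t, f (l (fun j => ⟨m j, Nat.lt_succ_of_le (hm j)⟩) t)) i : ℤ) := by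
    intro m hm i
    rw [l.sum_comp_apply, Pi.add_apply, Pi.smul_apply, smul_eq_mul, mul_comm]
    push_cast
    rfl
  refine ⟨fun _ => s, fun i => b i, fun _ => by positivity, fun m hm i => ?_, c, fun m hm => ?_⟩
  · rw [hgrid m hm]
    refine ⟨by positivity, Int.ofNat_le.2 (le_trans ?_ hN)⟩
    rw [Finset.sum_apply]
    exact sum_fin_val_le_mul_card k _
  · simp only [hgrid m hm]
    exact hc _

/-- van der Waerden's theorem in `ℤ^d`: for all `r, k, d ≥ 1` there is a
number `W` such that for every colouring of `ℤ^d` with `r` colours and every `N ≥ W`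
there is a monochromatic `d`-dimensional grid of depth `k` contained in `{0,…,N}^d`. -/
theorem stmt_1 (r k d : ℕ) (hr : 1 ≤ r) (hk : 1 ≤ k) (hd : 1 ≤ d) :
    ∃ W : ℕ, ∀ (χ : (Fin d → ℤ) → Fin r) (N : ℕ), W ≤ N →
      ∃ kv lv : Fin d → ℤ,
        (∀ i, 0 < kv i) ∧
        (∀ m : Fin d → ℕ, (∀ i, m i ≤ k) →
          ∀ i, 0 ≤ lv i + (m i : ℤ) * kv i ∧ lv i + (m i : ℤ) * kv i ≤ (N : ℤ)) ∧
        ∃ c : Fin r, ∀ m : Fin d → ℕ, (∀ i, m i ≤ k) →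
          χ (fun i => lv i + (m i : ℤ) * kv i) = c :=
  stmt_1_general r k d
end

section
/- Let Λ ⊆ ℝ^d be a Meyer set and k ∈ ℕ. Then the following are equivalent: (i) for every N ∈ ℕ, Λ contains an li-arithmetic progression of rank k and length N; (ii) for every n ≥ k and every N ∈ ℕ, Λ contains an n-dimensional arithmetic progression of rank k and length N. -/
open scoped Pointwise

/-- A set is relatively dense if some radius `R > 0` works: every open ball of
radius `R` contains a point of the set. -/
def RelativelyDense {d : ℕ} (Λ : Set (EuclideanSpace ℝ (Fin d))) : Prop :=
  ∃ R > (0 : ℝ), ∀ x : EuclideanSpace ℝ (Fin d), ∃ y ∈ Λ, y ∈ Metric.ball x R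

/-- A set is uniformly discrete if some radius `r > 0` works: every open ball of
radius `r` contains at most one point of the set. -/
def UniformlyDiscrete {d : ℕ} (S : Set (EuclideanSpace ℝ (Fin d))) : Prop :=
  ∃ r > (0 : ℝ), ∀ x : EuclideanSpace ℝ (Fin d), (S ∩ Metric.ball x r).Subsingleton

/-- A Meyer set: relatively dense with `Λ - Λ` uniformly discrete. -/
def IsMeyerSet {d : ℕ} (Λ : Set (EuclideanSpace ℝ (Fin d))) : Prop :=
  RelativelyDense Λ ∧ UniformlyDiscrete (Λ - Λ)

/-- `Λ` contains an li-arithmetic progression of rank `k` and length `N`: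
there are a starting point `s` and ratios `r₁, …, r_k`, linearly independent over `ℤ`,
with `s + ∑ cᵢ rᵢ ∈ Λ` for all integers `0 ≤ cᵢ ≤ N`. -/
def HasLiAP {d : ℕ} (Λ : Set (EuclideanSpace ℝ (Fin d))) (k N : ℕ) : Prop :=
  ∃ (s : EuclideanSpace ℝ (Fin d)) (r : Fin k → EuclideanSpace ℝ (Fin d)),
    LinearIndependent ℤ r ∧
    ∀ c : Fin k → ℕ, (∀ i, c i ≤ N) → s + ∑ i, (c i : ℝ) • r i ∈ Λ

/-- `Λ` contains an `n`-dimensional arithmetic progression of length `N` whose rank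
(the rank of the `ℤ`-module generated by its ratios) equals `rk`. -/
def HasAPOfRank {d : ℕ} (Λ : Set (EuclideanSpace ℝ (Fin d))) (n N rk : ℕ) : Prop :=
  ∃ (s : EuclideanSpace ℝ (Fin d)) (r : Fin n → EuclideanSpace ℝ (Fin d)),
    Module.finrank ℤ (Submodule.span ℤ (Set.range r)) = rk ∧
    ∀ c : Fin n → ℕ, (∀ i, c i ≤ N) → s + ∑ i, (c i : ℝ) • r i ∈ Λ

/-
An li-progression with ratios `r₁, …, r_k` becomes an `n`-dimensional progression of rank `k`
for any `n ≥ k` by appending `n - k` zero ratios, which changes neither the points nor the span.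
Conversely, a `k`-dimensional progression of rank `k` is an li-progression: `ℤ` is Noetherian,
hence has the Orzech property, so `k` vectors whose span has rank `k` are linearly independent.
-/

open Module

theorem span_range_append_zero {V : Type*} [AddCommGroup V] [Module ℤ V] {k m : ℕ}
    (r : Fin k → V) :
    Submodule.span ℤ (Set.range (Fin.append r (0 : Fin m → V))) =
      Submodule.span ℤ (Set.range r) := by
  apply le_antisymm <;> rw [Submodule.span_le]
  · rintro _ ⟨i, rfl⟩
    induction i using Fin.addCases with
    | left j => simpa using Submodule.subset_span (Set.mem_range_self j)
    | right j => simp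
  · rintro _ ⟨j, rfl⟩
    exact Submodule.subset_span ⟨Fin.castAdd m j, by simp⟩

section ArithmeticProgressions

variable {d : ℕ} {Λ : Set (EuclideanSpace ℝ (Fin d))}

theorem hasAPOfRank_self_iff_hasLiAP {k N : ℕ} : HasAPOfRank Λ k N k ↔ HasLiAP Λ k N := by
  have hli : ∀ r : Fin k → EuclideanSpace ℝ (Fin d),
      finrank ℤ (Submodule.span ℤ (Set.range r)) = k ↔ LinearIndependent ℤ r := fun r => by
    rw [linearIndependent_iff_card_eq_finrank_span, Fintype.card_fin, eq_comm, Set.finrank]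
  simp only [HasAPOfRank, HasLiAP, hli]

theorem HasAPOfRank.of_le {k n N rk : ℕ} (h : HasAPOfRank Λ k N rk) (hkn : k ≤ n) :
    HasAPOfRank Λ n N rk := by
  obtain ⟨m, rfl⟩ := Nat.exists_eq_add_of_le hkn
  obtain ⟨s, r, hrk, hmem⟩ := h
  refine ⟨s, Fin.append r 0, by rwa [span_range_append_zero], fun c hc => ?_⟩
  simpa [Fin.sum_univ_add] using hmem (fun j => c (Fin.castAdd m j)) (fun j => hc _)

end ArithmeticProgressions

theorem stmt_4_general {d : ℕ} (Λ : Set (EuclideanSpace ℝ (Fin d)))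
    (k : ℕ) :
    (∀ N : ℕ, HasLiAP Λ k N) ↔ (∀ n : ℕ, k ≤ n → ∀ N : ℕ, HasAPOfRank Λ n N k) :=
  ⟨fun h _ hkn N => (hasAPOfRank_self_iff_hasLiAP.2 (h N)).of_le hkn,
    fun h N => hasAPOfRank_self_iff_hasLiAP.1 (h k le_rfl N)⟩

/-- for a Meyer set `Λ ⊆ ℝ^d` and `k ∈ ℕ`, `Λ` contains li-arithmetic
progressions of rank `k` and every length iff for every dimension `n ≥ k` and every
length `N`, `Λ` contains an `n`-dimensional arithmetic progression of rank `k` and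
length `N`. -/
theorem stmt_4 {d : ℕ} (Λ : Set (EuclideanSpace ℝ (Fin d))) (hΛ : IsMeyerSet Λ)
    (k : ℕ) :
    (∀ N : ℕ, HasLiAP Λ k N) ↔ (∀ n : ℕ, k ≤ n → ∀ N : ℕ, HasAPOfRank Λ n N k) :=
  stmt_4_general Λ k
end

section
/- Let (ℝ^d, ℝ^m, ℒ) be a fully Euclidean cut-and-project scheme and let W ⊆ ℝ^m be any set with nonempty interior. Then Λ(W) generates L := π₁(ℒ) as a group. In particular, the ℤ-module generated by Λ(W) is free of rank d + m, and there exist vectors r₁, …, r_{d+m} ∈ Λ(W) which are linearly independent over ℤ. -/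
/-- A lattice in a topological abelian group: a discrete subgroup with compact
quotient (spelled: there is a compact set of representatives). -/
def IsLattice {E : Type*} [AddCommGroup E] [TopologicalSpace E] (L : AddSubgroup E) : Prop :=
  DiscreteTopology L ∧ ∃ K : Set E, IsCompact K ∧ ∀ x : E, ∃ l ∈ L, x - l ∈ K

/-- A fully Euclidean cut-and-project scheme `(ℝ^d, ℝ^m, ℒ)`: `ℒ` is a lattice in
`ℝ^d × ℝ^m`, the first projection is injective on `ℒ`, and the image of `ℒ` under the
second projection is dense in `ℝ^m`. -/
def IsCPS (d m : ℕ)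
    (L : AddSubgroup (EuclideanSpace ℝ (Fin d) × EuclideanSpace ℝ (Fin m))) : Prop :=
  IsLattice L ∧ (∀ p ∈ L, ∀ q ∈ L, p.1 = q.1 → p = q) ∧
    Dense (Prod.snd '' (L : Set (EuclideanSpace ℝ (Fin d) × EuclideanSpace ℝ (Fin m))))

/-- The projection `Λ(W) = {x : ∃ y ∈ W, (x, y) ∈ ℒ}` of the points of the lattice
whose second coordinate lies in the window `W`. -/
def cutProject {α β : Type*} [AddCommGroup α] [AddCommGroup β]
    (L : AddSubgroup (α × β)) (W : Set β) : Set α :=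
  {x | ∃ y ∈ W, (x, y) ∈ L}

/-!
Since `π₂(ℒ)` is dense, every lattice point `p` with `π₂ p` small is a difference of two
points of `ℒ` whose second coordinates lie in a ball inside `W`, so `π₁ p` lies in the group
generated by `Λ(W)`. The lattice points with small second coordinate generate all of `ℒ`:
given `g`, pick `h ∈ ℒ` with `π₂ h ≈ π₂ g / N`; then both `h` and `N • h - g` have small
second coordinate. As `π₁` is injective on `ℒ`, the group generated by `Λ(W)` is isomorphic
to `ℒ`, a full-rank `ℤ`-lattice in `ℝ^(d+m)`. Finally `d + m` independent vectors can be
taken inside `Λ(W)` itself by passing to `ℚ`-spans, where maximal independent subsets of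
`Λ(W)` exist.
-/

open Submodule Module Metric

theorem AddSubgroup.closure_preimage_ball_eq_top {G V : Type*} [AddCommGroup G]
    [NormedAddCommGroup V] [NormedSpace ℝ V] {f : G →+ V} (hf : DenseRange f) {ε : ℝ}
    (hε : 0 < ε) : AddSubgroup.closure (f ⁻¹' ball 0 ε) = ⊤ := by
  refine eq_top_iff.mpr fun g _ => ?_
  obtain ⟨N, hN⟩ := exists_nat_gt (2 * ‖f g‖ / ε)
  have hN0 : (0 : ℝ) < N := lt_of_le_of_lt (by positivity) hN
  have hN1 : (1 : ℝ) ≤ N := Nat.one_le_cast.mpr (Nat.cast_pos.mp hN0)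
  have hNε : 2 * ‖f g‖ < N * ε := (div_lt_iff₀ hε).mp hN
  obtain ⟨h, hh⟩ :=
    hf.exists_dist_lt ((N : ℝ)⁻¹ • f g) (by positivity : 0 < ε / (2 * N))
  rw [dist_comm, dist_eq_norm] at hh
  have hh_small : ‖f h‖ < ε := calc
    ‖f h‖ ≤ ‖f h - (N : ℝ)⁻¹ • f g‖ + ‖(N : ℝ)⁻¹ • f g‖ := norm_le_norm_sub_add _ _
    _ < ε / (2 * N) + ‖f g‖ / N := by
        rw [norm_smul, norm_inv, RCLike.norm_natCast, inv_mul_eq_div]; gcongr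
    _ ≤ ε := by
        have h₁ : ε / (2 * N) ≤ ε / 2 :=
          div_le_div_of_nonneg_left hε.le two_pos (by linarith)
        have h₂ : ‖f g‖ / N ≤ ε / 2 := by rw [div_le_div_iff₀ hN0 two_pos]; linarith
        linarith
  have hNh_small : ‖f (N • h - g)‖ < ε := calc
    ‖f (N • h - g)‖ = N * ‖f h - (N : ℝ)⁻¹ • f g‖ := by
        rw [map_sub, map_nsmul, ← Nat.cast_smul_eq_nsmul ℝ, ← smul_inv_smul₀ hN0.ne' (f g),
          ← smul_sub, norm_smul, RCLike.norm_natCast, inv_smul_smul₀ hN0.ne']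
    _ < N * (ε / (2 * N)) := by gcongr
    _ ≤ ε := by rw [mul_div_assoc', mul_comm 2, mul_div_mul_left _ _ hN0.ne']; linarith
  have hmem : ∀ x, ‖f x‖ < ε → x ∈ AddSubgroup.closure (f ⁻¹' ball 0 ε) := fun x hx =>
    AddSubgroup.subset_closure (mem_ball_zero_iff.mpr hx)
  simpa using sub_mem (nsmul_mem (hmem h hh_small) N) (hmem _ hNh_small)

section CutProject

variable {α β : Type*} [AddCommGroup α] [AddCommGroup β] {L : AddSubgroup (α × β)} {W : Set β}

theorem fst_mem_closure_cutProject {p z : α × β} (hp : p ∈ L) (hz : z ∈ L)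
    (hzW : z.2 ∈ W) (hzpW : z.2 + p.2 ∈ W) : p.1 ∈ AddSubgroup.closure (cutProject L W) := by
  have hz₁ : z.1 ∈ cutProject L W := ⟨z.2, hzW, hz⟩
  have hzp₁ : z.1 + p.1 ∈ cutProject L W := ⟨z.2 + p.2, hzpW, L.add_mem hz hp⟩
  simpa using sub_mem (AddSubgroup.subset_closure hzp₁) (AddSubgroup.subset_closure hz₁)

noncomputable def cutProjectSpanEquiv (hinj : ∀ p ∈ L, ∀ q ∈ L, p.1 = q.1 → p = q)
    (hclos : AddSubgroup.closure (cutProject L W) = L.map (AddMonoidHom.fst α β)) :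
    L.toIntSubmodule ≃ₗ[ℤ] span ℤ (cutProject L W) :=
  let g := (LinearMap.fst ℤ α β).comp L.toIntSubmodule.subtype
  have hg : Function.Injective g := fun a b hab => Subtype.ext (hinj a a.2 b b.2 hab)
  have hrange : LinearMap.range g = span ℤ (cutProject L W) := by
    apply Submodule.toAddSubgroup_injective
    rw [span_int_eq_addSubgroupClosure, hclos]
    ext x
    exact ⟨fun ⟨a, ha⟩ => ⟨a, a.2, ha⟩, fun ⟨p, hp, hpx⟩ => ⟨⟨p, hp⟩, hpx⟩⟩
  (LinearEquiv.ofInjective g hg).trans (LinearEquiv.ofEq _ _ hrange)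

end CutProject

theorem closure_cutProject_eq_map_fst {α β : Type*} [AddCommGroup α] [NormedAddCommGroup β]
    [NormedSpace ℝ β] {L : AddSubgroup (α × β)} {W : Set β}
    (hdense : Dense (Prod.snd '' (L : Set (α × β)))) (hW : (interior W).Nonempty) :
    AddSubgroup.closure (cutProject L W) = L.map (AddMonoidHom.fst α β) := by
  refine le_antisymm ((AddSubgroup.closure_le _).mpr ?_) ?_
  · rintro x ⟨y, -, hxy⟩
    exact ⟨(x, y), hxy, rfl⟩
  obtain ⟨w, hw⟩ := hW
  obtain ⟨ε, hε, hball⟩ := Metric.isOpen_iff.mp isOpen_interior w hw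
  let f : L →+ β := (AddMonoidHom.snd α β).comp L.subtype
  have hf : DenseRange f := by
    simpa [DenseRange, f, Set.range_comp] using hdense
  have hsmall : ⊤ ≤ (AddSubgroup.closure (cutProject L W)).comap
      ((AddMonoidHom.fst α β).comp L.subtype) := by
    rw [← AddSubgroup.closure_preimage_ball_eq_top hf (half_pos hε), AddSubgroup.closure_le]
    rintro q hq
    replace hq : ‖(q : α × β).2‖ < ε / 2 := mem_ball_zero_iff.mp hq
    obtain ⟨_, ⟨z, hz, rfl⟩, hzw⟩ :=
      hdense.exists_mem_open isOpen_ball (nonempty_ball.mpr (half_pos hε))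
    refine fst_mem_closure_cutProject q.2 hz (interior_subset (hball ?_))
      (interior_subset (hball ?_))
    · exact ball_subset_ball (half_le_self hε.le) hzw
    · rw [mem_ball] at hzw ⊢
      calc dist (z.2 + q.1.2) w ≤ dist (z.2 + q.1.2) z.2 + dist z.2 w := dist_triangle _ _ _
        _ < ε := by rw [dist_self_add_left]; linarith
  rintro _ ⟨p, hp, rfl⟩
  exact hsmall (AddSubgroup.mem_top ⟨p, hp⟩)

theorem AddSubgroup.span_eq_top_of_isCompact_of_forall_sub_mem {E : Type*}
    [NormedAddCommGroup E] [NormedSpace ℝ E] [FiniteDimensional ℝ E] {L : AddSubgroup E}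
    {K : Set E} (hK : IsCompact K) (hrep : ∀ x : E, ∃ l ∈ L, x - l ∈ K) :
    span ℝ (L : Set E) = ⊤ := by
  by_contra h
  obtain ⟨f, hf0, hker⟩ :=
    (span ℝ (L : Set E)).exists_le_ker_of_lt_top (lt_top_iff_ne_top.mpr h)
  obtain ⟨C, hC⟩ := isBounded_iff_forall_norm_le.mp
    (hK.image f.continuous_of_finiteDimensional).isBounded
  have hbdd : ∀ x, ‖f x‖ ≤ C := fun x => by
    obtain ⟨l, hl, hxl⟩ := hrep x
    have hfl : f l = 0 := hker (subset_span hl)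
    simpa [hfl] using hC _ ⟨x - l, hxl, rfl⟩
  obtain ⟨v, hv⟩ : ∃ v, f v ≠ 0 := not_forall.mp fun h => hf0 (LinearMap.ext h)
  have := hbdd (((C + 1) / f v) • v)
  rw [map_smul, smul_eq_mul, div_mul_cancel₀ _ hv, Real.norm_eq_abs] at this
  linarith [le_abs_self (C + 1)]

theorem exists_linearIndependent_of_le_rank_span {K V : Type*} [DivisionRing K]
    [AddCommGroup V] [Module K V] {s : Set V} {n : ℕ} (hn : n ≤ Module.rank K (span K s)) :
    ∃ r : Fin n → V, (∀ i, r i ∈ s) ∧ LinearIndependent K r := by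
  obtain ⟨t, hts, hspan, ht⟩ := exists_linearIndependent K s
  rw [← hspan, rank_span_set ht] at hn
  obtain ⟨e⟩ : Nonempty (Fin n ↪ t) := Cardinal.lift_mk_le'.mp (by simpa using hn)
  exact ⟨fun i => e i, fun i => hts (e i).2, ht.comp e e.injective⟩

theorem exists_linearIndependent_int_of_le_finrank_span {V : Type*} [AddCommGroup V]
    [Module ℚ V] {s : Set V} {n : ℕ} (hn : n ≤ finrank ℤ (span ℤ s)) :
    ∃ r : Fin n → V, (∀ i, r i ∈ s) ∧ LinearIndependent ℤ r := by
  obtain ⟨g, hg⟩ := exists_linearIndependent_of_le_finrank hn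
  have hgℚ : LinearIndependent ℚ (fun i => (g i : V)) :=
    (LinearIndependent.iff_fractionRing ℤ ℚ).mp (hg.map' _ (ker_subtype _))
  have hmem : ∀ i, (g i : V) ∈ span ℚ s := fun i => span_le_restrictScalars ℤ ℚ s (g i).2
  have hrank : (n : Cardinal) ≤ Module.rank ℚ (span ℚ s) := by
    simpa using (LinearIndependent.of_comp (span ℚ s).subtype
      (v := fun i => (⟨g i, hmem i⟩ : span ℚ s)) hgℚ).cardinal_lift_le_rank
  obtain ⟨r, hrs, hr⟩ := exists_linearIndependent_of_le_rank_span hrank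
  exact ⟨r, hrs, (LinearIndependent.iff_fractionRing ℤ ℚ).mpr hr⟩

/-- in a fully Euclidean CPS `(ℝ^d, ℝ^m, ℒ)`, for any window `W ⊆ ℝ^m`
with nonempty interior, `Λ(W)` generates `L = π₁(ℒ)` as a group; in particular the
`ℤ`-module generated by `Λ(W)` is free of finite rank `d + m`, and there exist
`d + m` vectors in `Λ(W)` which are linearly independent over `ℤ`. -/
theorem stmt_5 {d m : ℕ}
    (L : AddSubgroup (EuclideanSpace ℝ (Fin d) × EuclideanSpace ℝ (Fin m)))
    (hL : IsCPS d m L) (W : Set (EuclideanSpace ℝ (Fin m)))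
    (hW : (interior W).Nonempty) :
    AddSubgroup.closure (cutProject L W)
        = L.map (AddMonoidHom.fst (EuclideanSpace ℝ (Fin d)) (EuclideanSpace ℝ (Fin m))) ∧
      Module.Free ℤ (Submodule.span ℤ (cutProject L W)) ∧
      Module.Finite ℤ (Submodule.span ℤ (cutProject L W)) ∧
      Module.finrank ℤ (Submodule.span ℤ (cutProject L W)) = d + m ∧
      ∃ r : Fin (d + m) → EuclideanSpace ℝ (Fin d),
        (∀ i, r i ∈ cutProject L W) ∧ LinearIndependent ℤ r := by
  obtain ⟨⟨hdisc, K, hK, hrep⟩, hinj, hdense⟩ := hL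
  have hclos := closure_cutProject_eq_map_fst hdense hW
  have : DiscreteTopology L.toIntSubmodule := hdisc
  have : IsZLattice ℝ L.toIntSubmodule :=
    ⟨AddSubgroup.span_eq_top_of_isCompact_of_forall_sub_mem hK hrep⟩
  have := ZLattice.module_free ℝ L.toIntSubmodule
  have := ZLattice.module_finite ℝ L.toIntSubmodule
  let e := cutProjectSpanEquiv hinj hclos
  have hrank : finrank ℤ (span ℤ (cutProject L W)) = d + m := by
    rw [← e.finrank_eq, ZLattice.rank ℝ, finrank_prod, finrank_euclideanSpace_fin,
      finrank_euclideanSpace_fin]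
  exact ⟨hclos, .of_equiv e, .equiv e, hrank,
    exists_linearIndependent_int_of_le_finrank_span hrank.ge⟩
end

section
/- Let (ℝ^d, ℝ^m, ℒ) be a fully Euclidean cut-and-project scheme and let W ⊆ ℝ^m be precompact with nonempty interior. Then for each N ∈ ℕ there exists R > 0 such that for all y ∈ ℝ^d there exist s ∈ ℝ^d and vectors r₁, …, r_{d+m} ∈ ℝ^d linearly independent over ℤ such that s + ∑_{i=1}^{d+m} cᵢrᵢ ∈ Λ(W) ∩ B_R(y) for all integers 0 ≤ cᵢ ≤ N; that is, Λ(W) ∩ B_R(y) contains an li-arithmetic progression of length N and rank d + m. -/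
/-! The points of `ℒ` whose internal component lies in a small ball `B_δ(0)` generate `ℒ`
(by density of `π₂(ℒ)` and connectedness of `ℝ^m`), so, `ℒ` being cocompact, they span
`ℝ^d × ℝ^m` and contain a basis `b`. Rounding down the `b`-coordinates of `(y, w₀)`, for `w₀`
interior to `W`, gives `ℓ ∈ ℒ` such that every `ℓ + ∑ cᵢ bᵢ` with `0 ≤ cᵢ ≤ N` differs from
`(y, w₀)` by `∑ tᵢ bᵢ` with `|tᵢ| ≤ N + 1`: its physical part is close to `y` and its internal
part is `(N + 1)(d + m)δ`-close to `w₀`, hence in `W` for small `δ`. Injectivity of `π₁` on `ℒ`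
turns the `ℝ`-independence of `b` into `ℤ`-independence of the ratios `π₁ bᵢ`. -/

open Module Topology

theorem AddSubgroup.span_eq_top_of_isCompact_add {E : Type*} [NormedAddCommGroup E]
    [NormedSpace ℝ E] [FiniteDimensional ℝ E] (L : AddSubgroup E) {K : Set E}
    (hK : IsCompact K) (hcov : ∀ x : E, ∃ l ∈ L, x - l ∈ K) :
    Submodule.span ℝ (L : Set E) = ⊤ := by
  by_contra h
  obtain ⟨f, hf0, hfL⟩ :=
    Submodule.exists_dual_map_eq_bot_of_lt_top (lt_top_iff_ne_top.mpr h) inferInstance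
  -- `f` vanishes on `L`, so it maps all of `E` into the compact set `f '' K`.
  have hsurj : Set.univ ⊆ f '' K := by
    intro t _
    obtain ⟨x, rfl⟩ := LinearMap.range_eq_top.mp (Dual.range_eq_top_of_ne_zero hf0) t
    obtain ⟨l, hl, hxl⟩ := hcov x
    have hfl : f l = 0 := by
      simpa [hfL] using Submodule.mem_map_of_mem (f := f) (Submodule.subset_span hl)
    exact ⟨x - l, hxl, by simp [hfl]⟩
  exact noncompact_univ ℝ
    ((hK.image f.continuous_of_finiteDimensional).of_isClosed_subset isClosed_univ hsurj)

theorem AddSubgroup.closure_setOf_snd_mem_eq {G H : Type*} [AddCommGroup G] [AddCommGroup H]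
    [TopologicalSpace H] [IsTopologicalAddGroup H] [ConnectedSpace H] (L : AddSubgroup (G × H))
    (hL : Dense (Prod.snd '' (L : Set (G × H)))) {U : Set H} (hU : U ∈ 𝓝 0) :
    AddSubgroup.closure {p | p ∈ L ∧ p.2 ∈ U} = L := by
  set S := {p | p ∈ L ∧ p.2 ∈ U}
  have hSL : AddSubgroup.closure S ≤ L := (AddSubgroup.closure_le _).mpr fun p hp ↦ hp.1
  refine le_antisymm hSL fun p hp ↦ ?_
  set M₀ := (AddSubgroup.closure S).map (AddMonoidHom.snd G H)
  set M := M₀.topologicalClosure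
  have hM_nhds : (M : Set H) ∈ 𝓝 0 := by
    obtain ⟨V, hVU, hVo, hV0⟩ := mem_nhds_iff.mp hU
    refine Filter.mem_of_superset (hVo.mem_nhds hV0) fun v hv ↦ ?_
    refine _root_.closure_mono ?_ (hL.open_subset_closure_inter hVo hv)
    rintro _ ⟨hwV, q, hq, rfl⟩
    exact ⟨q, AddSubgroup.subset_closure ⟨hq, hVU hwV⟩, rfl⟩
  -- A closed subgroup that is a neighbourhood of `0` is clopen, hence everything.
  have hM : (M : Set H) = Set.univ :=
    IsClopen.eq_univ ⟨M₀.isClosed_topologicalClosure, M.isOpen_of_mem_nhds hM_nhds⟩ ⟨0, M.zero_mem⟩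
  have hpU : (fun h ↦ p.2 - h) ⁻¹' U ∈ 𝓝 p.2 :=
    (continuous_const.sub continuous_id).continuousAt.preimage_mem_nhds (by simpa using hU)
  obtain ⟨_, hgU, g, hg, rfl⟩ :=
    mem_closure_iff_nhds.mp (hM ▸ Set.mem_univ p.2 : p.2 ∈ (M : Set H)) _ hpU
  have hpg : p - g ∈ S := ⟨L.sub_mem hp (hSL hg), hgU⟩
  simpa using add_mem (AddSubgroup.subset_closure hpg) hg

theorem AddSubgroup.span_setOf_snd_mem_eq_top {E F : Type*} [NormedAddCommGroup E]
    [NormedSpace ℝ E] [NormedAddCommGroup F] [NormedSpace ℝ F] [FiniteDimensional ℝ E]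
    [FiniteDimensional ℝ F] (L : AddSubgroup (E × F)) {K : Set (E × F)} (hK : IsCompact K)
    (hcov : ∀ x, ∃ l ∈ L, x - l ∈ K) (hL : Dense (Prod.snd '' (L : Set (E × F))))
    {U : Set F} (hU : U ∈ 𝓝 0) :
    Submodule.span ℝ {p | p ∈ L ∧ p.2 ∈ U} = ⊤ := by
  refine top_le_iff.mp ?_
  calc ⊤ = Submodule.span ℝ (L : Set (E × F)) := (L.span_eq_top_of_isCompact_add hK hcov).symm
    _ = Submodule.span ℝ (AddSubgroup.closure {p | p ∈ L ∧ p.2 ∈ U} : Set (E × F)) := by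
      rw [L.closure_setOf_snd_mem_eq hL hU]
    _ ≤ _ := Submodule.span_le.mpr <|
    (AddSubgroup.closure_le (Submodule.span ℝ _).toAddSubgroup).mpr Submodule.subset_span

theorem Module.Basis.exists_fin_forall_mem_of_span_eq_top {K V : Type*} [DivisionRing K]
    [AddCommGroup V] [Module K V] [FiniteDimensional K V] {s : Set V}
    (hs : Submodule.span K s = ⊤) {n : ℕ} (hn : finrank K V = n) :
    ∃ b : Basis (Fin n) K V, ∀ i, b i ∈ s := by
  obtain ⟨t, hts, htspan, htli⟩ := exists_linearIndependent K s
  have : Fintype t := htli.setFinite.fintype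
  let b := Basis.mk htli (by simp [htspan, hs])
  let e : t ≃ Fin n := Fintype.equivFinOfCardEq ((finrank_eq_card_basis b).symm.trans hn)
  exact ⟨b.reindex e, fun i ↦ by simpa [b] using hts (e.symm i).2⟩

theorem LinearIndependent.int_fst_of_injOn {G H ι : Type*} [AddCommGroup G] [Module ℝ G]
    [AddCommGroup H] [Module ℝ H] {L : AddSubgroup (G × H)}
    (hinj : Set.InjOn Prod.fst (L : Set (G × H))) {v : ι → G × H}
    (hv : LinearIndependent ℝ v) (hvL : ∀ i, v i ∈ L) :
    LinearIndependent ℤ fun i ↦ (v i).1 := by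
  refine (hv.restrict_scalars' ℤ).map (f := LinearMap.fst ℤ G H) ?_
  refine Submodule.disjoint_def.mpr fun p hp hp1 ↦ hinj ?_ L.zero_mem hp1
  exact (Submodule.span_le (p := L.toIntSubmodule)).mpr (Set.range_subset_iff.mpr hvL) hp

theorem norm_sum_smul_le_of_abs_le {E ι : Type*} [SeminormedAddCommGroup E] [NormedSpace ℝ E]
    (s : Finset ι) (v : ι → E) {t : ι → ℝ} {C : ℝ} (ht : ∀ i ∈ s, |t i| ≤ C) :
    ‖∑ i ∈ s, t i • v i‖ ≤ C * ∑ i ∈ s, ‖v i‖ := by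
  rw [Finset.mul_sum]
  refine (norm_sum_le _ _).trans (Finset.sum_le_sum fun i hi ↦ ?_)
  rw [norm_smul, Real.norm_eq_abs]
  exact mul_le_mul_of_nonneg_right (ht i hi) (norm_nonneg _)

-- Round the coordinates of `x` down: the coefficients `⌊a i⌋ + c i - a i` then lie in `(-1, N]`.
theorem Module.Basis.exists_mem_add_sum_sub_eq {V ι : Type*} [AddCommGroup V] [Module ℝ V]
    [Fintype ι] (b : Basis ι ℝ V) {L : AddSubgroup V} (hbL : ∀ i, b i ∈ L) (x : V) :
    ∃ ℓ ∈ L, ∀ (N : ℕ) (c : ι → ℕ), (∀ i, c i ≤ N) →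
      ∃ t : ι → ℝ, (∀ i, |t i| ≤ N + 1) ∧ ℓ + ∑ i, (c i : ℝ) • b i - x = ∑ i, t i • b i := by
  set a := b.repr x
  refine ⟨∑ i, ⌊a i⌋ • b i, L.sum_mem fun i _ ↦ L.zsmul_mem (hbL i) _, fun N c hc ↦
    ⟨fun i ↦ ⌊a i⌋ + c i - a i, fun i ↦ ?_, ?_⟩⟩
  · have := Int.floor_le (a i)
    have := Int.lt_floor_add_one (a i)
    have : (c i : ℝ) ≤ N := by exact_mod_cast hc i
    rw [abs_le]
    constructor <;> linarith [(c i).cast_nonneg (α := ℝ)]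
  · conv_lhs => rw [← b.sum_repr x]
    simp only [add_smul, sub_smul, Finset.sum_add_distrib, Finset.sum_sub_distrib,
      Int.cast_smul_eq_zsmul]
    rfl

theorem Module.Basis.exists_mem_forall_norm_add_sum_sub_le {E F ι : Type*}
    [SeminormedAddCommGroup E] [NormedSpace ℝ E] [SeminormedAddCommGroup F] [NormedSpace ℝ F]
    [Fintype ι] (b : Basis ι ℝ (E × F)) {L : AddSubgroup (E × F)} (hbL : ∀ i, b i ∈ L)
    (y : E) (w : F) :
    ∃ ℓ ∈ L, ∀ (N : ℕ) (c : ι → ℕ), (∀ i, c i ≤ N) →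
      ‖ℓ.1 + ∑ i, (c i : ℝ) • (b i).1 - y‖ ≤ (N + 1) * ∑ i, ‖(b i).1‖ ∧
      ‖ℓ.2 + ∑ i, (c i : ℝ) • (b i).2 - w‖ ≤ (N + 1) * ∑ i, ‖(b i).2‖ := by
  obtain ⟨ℓ, hℓL, hℓ⟩ := b.exists_mem_add_sum_sub_eq hbL (y, w)
  refine ⟨ℓ, hℓL, fun N c hc ↦ ?_⟩
  obtain ⟨t, ht, hpt⟩ := hℓ N c hc
  have h1 : ℓ.1 + ∑ i, (c i : ℝ) • (b i).1 - y = ∑ i, t i • (b i).1 := by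
    simpa [Prod.fst_sum] using congrArg Prod.fst hpt
  have h2 : ℓ.2 + ∑ i, (c i : ℝ) • (b i).2 - w = ∑ i, t i • (b i).2 := by
    simpa [Prod.snd_sum] using congrArg Prod.snd hpt
  rw [h1, h2]
  exact ⟨norm_sum_smul_le_of_abs_le _ _ fun i _ ↦ ht i,
    norm_sum_smul_le_of_abs_le _ _ fun i _ ↦ ht i⟩

theorem stmt_8_general {d m : ℕ}
    (L : AddSubgroup (EuclideanSpace ℝ (Fin d) × EuclideanSpace ℝ (Fin m)))
    (hL : IsCPS d m L) (W : Set (EuclideanSpace ℝ (Fin m)))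
    (hWi : (interior W).Nonempty) (N : ℕ) :
    ∃ R > (0 : ℝ), ∀ y : EuclideanSpace ℝ (Fin d),
      ∃ (s : EuclideanSpace ℝ (Fin d)) (r : Fin (d + m) → EuclideanSpace ℝ (Fin d)),
        LinearIndependent ℤ r ∧
        ∀ c : Fin (d + m) → ℕ, (∀ i, c i ≤ N) →
          s + ∑ i, (c i : ℝ) • r i ∈ cutProject L W ∩ Metric.ball y R := by
  obtain ⟨⟨-, K, hK, hcov⟩, hinj, hdense⟩ := hL
  obtain ⟨w₀, hw₀⟩ := hWi
  obtain ⟨ε, hε, hεW⟩ := Metric.isOpen_iff.mp isOpen_interior w₀ hw₀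
  set δ := ε / ((N + 1) * (d + m + 1))
  have hδ : 0 < δ := by positivity
  obtain ⟨b, hb⟩ := Basis.exists_fin_forall_mem_of_span_eq_top
    (L.span_setOf_snd_mem_eq_top hK hcov hdense (Metric.ball_mem_nhds 0 hδ))
    (n := d + m) (by simp [finrank_prod])
  have hb2 : (N + 1) * ∑ i, ‖(b i).2‖ < ε := by
    have hsum : ∑ i, ‖(b i).2‖ ≤ (d + m) * δ := by
      refine (Finset.sum_le_sum fun i _ ↦ (mem_ball_zero_iff.mp (hb i).2).le).trans ?_
      simp
    have : δ * ((N + 1) * (d + m + 1)) = ε := div_mul_cancel₀ _ (by positivity)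
    nlinarith
  refine ⟨(N + 1) * ∑ i, ‖(b i).1‖ + 1, by positivity, fun y ↦ ?_⟩
  obtain ⟨ℓ, hℓL, hℓ⟩ := b.exists_mem_forall_norm_add_sum_sub_le (fun i ↦ (hb i).1) y w₀
  refine ⟨ℓ.1, fun i ↦ (b i).1,
    b.linearIndependent.int_fst_of_injOn (fun p hp q hq ↦ hinj p hp q hq) fun i ↦ (hb i).1,
    fun c hc ↦ ?_⟩
  obtain ⟨hfst, hsnd⟩ := hℓ N c hc
  have hpL : ℓ + ∑ i, (c i : ℝ) • b i ∈ L :=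
    L.add_mem hℓL (L.sum_mem fun i _ ↦ by
      rw [Nat.cast_smul_eq_nsmul]; exact L.nsmul_mem (hb i).1 _)
  refine ⟨⟨ℓ.2 + ∑ i, (c i : ℝ) • (b i).2, interior_subset (hεW ?_),
    by convert hpL using 1; ext <;> simp [Prod.fst_sum, Prod.snd_sum]⟩, ?_⟩
  · rw [Metric.mem_ball, dist_eq_norm]
    exact hsnd.trans_lt hb2
  · rw [Metric.mem_ball, dist_eq_norm]
    linarith

/-- for a fully Euclidean model set `Λ(W)` and each `N ∈ ℕ` there is
`R > 0` such that every ball `B_R(y)` contains an li-arithmetic progression of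
length `N` and rank `d + m` lying inside `Λ(W)`. -/
theorem stmt_8 {d m : ℕ}
    (L : AddSubgroup (EuclideanSpace ℝ (Fin d) × EuclideanSpace ℝ (Fin m)))
    (hL : IsCPS d m L) (W : Set (EuclideanSpace ℝ (Fin m)))
    (hWc : IsCompact (closure W)) (hWi : (interior W).Nonempty) (N : ℕ) :
    ∃ R > (0 : ℝ), ∀ y : EuclideanSpace ℝ (Fin d),
      ∃ (s : EuclideanSpace ℝ (Fin d)) (r : Fin (d + m) → EuclideanSpace ℝ (Fin d)),
        LinearIndependent ℤ r ∧
        ∀ c : Fin (d + m) → ℕ, (∀ i, c i ≤ N) →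
          s + ∑ i, (c i : ℝ) • r i ∈ cutProject L W ∩ Metric.ball y R :=
  stmt_8_general L hL W hWi N
end

section
/- Let (ℝ^d, ℝ^m, ℒ) be a fully Euclidean cut-and-project scheme and let W ⊆ ℝ^m be precompact with nonempty interior. Then for every r, k ∈ ℕ there exists R > 0 such that for every colouring of Λ(W) with r colours and every y ∈ ℝ^d, the set Λ(W) ∩ B_R(y) contains a monochromatic li-arithmetic progression of length k and rank d + m; that is, there exist s ∈ ℝ^d and r₁, …, r_{d+m} ∈ ℝ^d linearly independent over ℤ such that all points s + ∑_{i=1}^{d+m} cᵢrᵢ for integers 0 ≤ cᵢ ≤ k lie in Λ(W) ∩ B_R(y) and receive the same colour. -/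
/-!
Since the internal projection of the lattice is dense, the real span of the lattice vectors with
small internal component contains the lattice, hence is everything; so there are `d + m`
linearly independent lattice vectors `pᵢ` with internal components so small that the box
`s + ∑ cᵢ pᵢ`, `0 ≤ cᵢ ≤ M`, stays over a ball inside `W` as soon as the internal component of
the lattice point `s` is near the centre of that ball. Compactness of a fundamental domain
provides such an `s` within bounded distance of every `y`. A finitary Gallai theorem (with `M`
uniform in the colouring, obtained from the infinite homothetic-copy theorem by taking an
ultrafilter limit of colourings) yields a monochromatic copy `a • {0, …, k}ⁿ + b` inside the
box; its physical projection is the progression, with ratios `a • pᵢ.1`, which are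
ℤ-independent because the physical projection is injective on the lattice.
-/

open Filter Topology Metric

theorem exists_mono_homothetic_copy_bounded (ι κ : Type*) [Fintype ι] [Finite κ] (k : ℕ) :
    ∃ M : ℕ, ∀ C : (ι → ℕ) → κ, ∃ a > 0, ∃ (b : ι → ℕ) (col : κ),
      (∀ i, a * k + b i ≤ M) ∧ ∀ c : ι → ℕ, (∀ i, c i ≤ k) → C (a • c + b) = col := by
  classical
  by_contra! h
  choose C hC using h
  let U : Ultrafilter ℕ := .of atTop
  have hlim (x : ι → ℕ) : ∃ v, ∀ᶠ M in U, C M x = v := by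
    obtain ⟨v, hv⟩ := Ultrafilter.eq_pure_of_finite (U.map fun M => C M x)
    refine ⟨v, ?_⟩
    have : ∀ᶠ w in U.map fun M => C M x, w = v := by rw [hv]; exact rfl
    rwa [Ultrafilter.coe_map, eventually_map] at this
  choose C₀ hC₀ using hlim
  let S := Fintype.piFinset fun _ : ι => Finset.range (k + 1)
  obtain ⟨a, ha, b, col, hmono⟩ := Combinatorics.exists_mono_homothetic_copy S C₀
  have hmonoU : ∀ᶠ M in U, ∀ s ∈ S, C M (a • s + b) = col :=
    S.eventually_all.2 fun s hs => (hC₀ (a • s + b)).mono fun M hM => hM.trans (hmono s hs)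
  have hlarge : ∀ᶠ M in U, ∀ i, a * k + b i ≤ M :=
    Ultrafilter.of_le atTop (eventually_all.2 fun i => eventually_ge_atTop _)
  obtain ⟨M, hM, hMlarge⟩ := (hmonoU.and hlarge).exists
  obtain ⟨c, hck, hc⟩ := hC M a ha b col hMlarge
  exact hc (hM c (by simpa [S, Nat.lt_succ_iff] using hck))

theorem AddSubgroup.span_eq_top_of_isCompact_sub_mem {E : Type*} [NormedAddCommGroup E]
    [NormedSpace ℝ E] [FiniteDimensional ℝ E] (L : AddSubgroup E) {K : Set E}
    (hK : IsCompact K) (hrep : ∀ x, ∃ l ∈ L, x - l ∈ K) :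
    Submodule.span ℝ (L : Set E) = ⊤ := by
  obtain ⟨C, hC⟩ := hK.isBounded.subset_closedBall 0
  refine eq_top_iff.2 fun x _ => ?_
  rw [← SetLike.mem_coe, ← (Submodule.span ℝ (L : Set E)).closed_of_finiteDimensional.closure_eq]
  choose l hlL hlK using fun n : ℕ => hrep ((n : ℝ) • x)
  have hlim : Tendsto (fun n : ℕ => (n : ℝ)⁻¹ • l n) atTop (𝓝 x) := by
    rw [tendsto_iff_norm_sub_tendsto_zero]
    refine squeeze_zero' (Eventually.of_forall fun _ => norm_nonneg _) ?_
      (tendsto_const_div_atTop_nhds_zero_nat C)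
    filter_upwards [eventually_ne_atTop 0] with n hn
    have hn' : (n : ℝ) ≠ 0 := Nat.cast_ne_zero.2 hn
    have hdist : ‖(n : ℝ) • x - l n‖ ≤ C := by simpa using hC (hlK n)
    have hsub : (n : ℝ)⁻¹ • l n - x = -((n : ℝ)⁻¹ • ((n : ℝ) • x - l n)) := by
      rw [smul_sub, inv_smul_smul₀ hn']; abel
    calc ‖(n : ℝ)⁻¹ • l n - x‖ = (n : ℝ)⁻¹ * ‖(n : ℝ) • x - l n‖ := by
          rw [hsub, norm_neg, norm_smul, norm_inv, RCLike.norm_natCast]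
      _ ≤ C / n := by rw [inv_mul_eq_div]; gcongr
  exact mem_closure_of_tendsto hlim
    (Eventually.of_forall fun n => Submodule.smul_mem _ _ (Submodule.subset_span (hlL n)))

theorem Dense.exists_small_nsmul_near {F : Type*} [NormedAddCommGroup F] [NormedSpace ℝ F]
    {D : Set F} (hD : Dense D) (v : F) {δ : ℝ} (hδ : 0 < δ) :
    ∃ N : ℕ, ∃ z ∈ D, ‖z‖ < δ ∧ ‖v - N • z‖ < δ := by
  obtain ⟨N, hN⟩ := exists_nat_gt (2 * ‖v‖ / δ)
  have hN0 : (0 : ℝ) < N := (by positivity : (0 : ℝ) ≤ 2 * ‖v‖ / δ).trans_lt hN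
  have hv : ‖(N : ℝ)⁻¹ • v‖ < δ / 2 := by
    rw [norm_smul, norm_inv, RCLike.norm_natCast, inv_mul_lt_iff₀ hN0]
    rw [div_lt_iff₀ hδ] at hN
    linarith
  obtain ⟨z, hzD, hz⟩ := hD.exists_dist_lt ((N : ℝ)⁻¹ • v) (by positivity : 0 < δ / (2 * N))
  have hz' : ‖(N : ℝ)⁻¹ • v - z‖ < δ / (2 * N) := by rwa [dist_eq_norm] at hz
  refine ⟨N, z, hzD, ?_, ?_⟩
  · have h1 : δ / (2 * N) ≤ δ / 2 := by
      gcongr; linarith [(Nat.one_le_cast (α := ℝ)).2 (Nat.cast_pos.1 hN0)]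
    calc ‖z‖ ≤ ‖(N : ℝ)⁻¹ • v‖ + ‖(N : ℝ)⁻¹ • v - z‖ := norm_le_insert _ _
      _ < δ / 2 + δ / 2 := by linarith
      _ = δ := add_halves δ
  · calc ‖v - N • z‖ = N * ‖(N : ℝ)⁻¹ • v - z‖ := by
          rw [← Nat.cast_smul_eq_nsmul ℝ, ← smul_inv_smul₀ hN0.ne' v, ← smul_sub, norm_smul,
            RCLike.norm_natCast, inv_smul_smul₀ hN0.ne']
      _ < N * (δ / (2 * N)) := by gcongr
      _ < δ := by field_simp; linarith

theorem dist_add_sum_natCast_smul_le {ι E : Type*} [Fintype ι] [SeminormedAddCommGroup E]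
    [NormedSpace ℝ E] {M : ℕ} {c : ι → ℕ} (hc : ∀ i, c i ≤ M) (s t : E) (x : ι → E) :
    dist (s + ∑ i, (c i : ℝ) • x i) t ≤ dist s t + M * ∑ i, ‖x i‖ := by
  have hsum : ‖∑ i, (c i : ℝ) • x i‖ ≤ M * ∑ i, ‖x i‖ := by
    rw [Finset.mul_sum]
    refine (norm_sum_le _ _).trans (Finset.sum_le_sum fun i _ => ?_)
    rw [norm_smul, RCLike.norm_natCast]
    gcongr
    exact hc i
  calc dist (s + ∑ i, (c i : ℝ) • x i) t ≤ dist (s + ∑ i, (c i : ℝ) • x i) s + dist s t :=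
        dist_triangle _ _ _
    _ ≤ dist s t + M * ∑ i, ‖x i‖ := by rw [dist_self_add_left]; linarith

theorem add_sum_natCast_smul_homothety {ι E : Type*} [Fintype ι] [AddCommGroup E] [Module ℝ E]
    (s : E) (x : ι → E) (a : ℕ) (b c : ι → ℕ) :
    s + ∑ i, (b i : ℝ) • x i + ∑ i, (c i : ℝ) • ((a : ℝ) • x i) =
      s + ∑ i, ((a • c + b) i : ℝ) • x i := by
  simp only [Pi.add_apply, Pi.smul_apply, smul_eq_mul, Nat.cast_add, Nat.cast_mul, add_smul,
    mul_smul, Finset.sum_add_distrib, smul_comm (a : ℝ)]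
  abel

theorem LinearIndependent.real_smul {ι E : Type*} [AddCommGroup E] [Module ℝ E] {v : ι → E}
    (hv : LinearIndependent ℤ v) {t : ℝ} (ht : t ≠ 0) : LinearIndependent ℤ fun i => t • v i :=
  hv.map' (DistribSMul.toAddMonoidHom E t).toIntLinearMap
    (LinearMap.ker_eq_bot.2 (smul_right_injective E ht))

section CutAndProject

variable {E₁ E₂ : Type*} [NormedAddCommGroup E₁] [NormedAddCommGroup E₂]
  {L : AddSubgroup (E₁ × E₂)}

theorem exists_mem_dist_snd_lt_dist_fst_le {K : Set (E₁ × E₂)} (hK : IsCompact K)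
    (hrep : ∀ x, ∃ l ∈ L, x - l ∈ K) (hden : Dense (Prod.snd '' (L : Set (E₁ × E₂))))
    (w : E₂) {ε : ℝ} (hε : 0 < ε) :
    ∃ C, ∀ y : E₁, ∃ l ∈ L, dist l.2 w < ε ∧ dist l.1 y ≤ C := by
  have hcover : Prod.snd '' K ⊆ ⋃ u ∈ (L : Set (E₁ × E₂)), ball u.2 ε := by
    intro x _
    obtain ⟨_, ⟨u, hu, rfl⟩, hxu⟩ := hden.exists_dist_lt x hε
    exact Set.mem_biUnion hu (mem_ball.2 hxu)
  obtain ⟨F, hFL, hF, hFcover⟩ :=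
    (hK.image continuous_snd).elim_finite_subcover_image (fun _ _ => isOpen_ball) hcover
  obtain ⟨C₁, hC₁⟩ := hK.isBounded.subset_closedBall 0
  obtain ⟨C₂, hC₂⟩ := hF.isBounded.subset_closedBall 0
  refine ⟨C₁ + C₂, fun y => ?_⟩
  obtain ⟨l, hlL, hlK⟩ := hrep (y, w)
  obtain ⟨u, huF, hu⟩ := Set.mem_iUnion₂.1 (hFcover ⟨_, hlK, rfl⟩)
  have hl : ‖(y, w) - l‖ ≤ C₁ := by simpa using hC₁ hlK
  have hu₁ : ‖u.1‖ ≤ C₂ := (norm_fst_le u).trans (by simpa using hC₂ huF)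
  refine ⟨l + u, L.add_mem hlL (hFL huF), ?_, ?_⟩
  · rw [mem_ball, dist_eq_norm] at hu
    calc dist (l + u).2 w = ‖((y, w) - l).2 - u.2‖ := by
          rw [dist_eq_norm, ← norm_neg, Prod.snd_add, Prod.snd_sub]; congr 1; abel
      _ < ε := hu
  · calc dist (l + u).1 y = ‖u.1 - ((y, w) - l).1‖ := by
          rw [dist_eq_norm, Prod.fst_add, Prod.fst_sub]; congr 1; abel
      _ ≤ ‖u.1‖ + ‖(y, w) - l‖ := (norm_sub_le _ _).trans (by gcongr; exact norm_fst_le _)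
      _ ≤ C₁ + C₂ := by linarith

variable [NormedSpace ℝ E₁] [NormedSpace ℝ E₂]

theorem linearIndependent_int_fst (hinj : ∀ p ∈ L, ∀ q ∈ L, p.1 = q.1 → p = q)
    {ι : Type*} {p : ι → E₁ × E₂} (hpL : ∀ i, p i ∈ L) (hp : LinearIndependent ℝ p) :
    LinearIndependent ℤ fun i => (p i).1 := by
  let f : L →ₗ[ℤ] E₁ := ((AddMonoidHom.fst E₁ E₂).comp L.subtype).toIntLinearMap
  have hf : LinearMap.ker f = ⊥ :=
    LinearMap.ker_eq_bot.2 fun u v huv => Subtype.ext (hinj _ u.2 _ v.2 huv)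
  have hpZ : LinearIndependent ℤ fun i => (⟨p i, hpL i⟩ : L) :=
    LinearIndependent.of_comp L.subtype.toIntLinearMap (hp.restrict_scalars' ℤ)
  exact hpZ.map' f hf

theorem mem_span_small_snd (hden : Dense (Prod.snd '' (L : Set (E₁ × E₂)))) {δ : ℝ}
    (hδ : 0 < δ) {l : E₁ × E₂} (hl : l ∈ L) :
    l ∈ Submodule.span ℝ {x | x ∈ L ∧ ‖x.2‖ < δ} := by
  obtain ⟨N, _, ⟨g, hgL, rfl⟩, hg, hlg⟩ := hden.exists_small_nsmul_near l.2 hδ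
  have hrest : l - N • g ∈ {x | x ∈ L ∧ ‖x.2‖ < δ} := ⟨L.sub_mem hl (L.nsmul_mem hgL N), hlg⟩
  rw [← sub_add_cancel l (N • g)]
  exact Submodule.add_mem _ (Submodule.subset_span hrest)
    (nsmul_mem (Submodule.subset_span (show g ∈ {x | x ∈ L ∧ ‖x.2‖ < δ} from ⟨hgL, hg⟩)) N)

theorem exists_linearIndependent_small_snd [FiniteDimensional ℝ E₁] [FiniteDimensional ℝ E₂]
    {K : Set (E₁ × E₂)} (hK : IsCompact K) (hrep : ∀ x, ∃ l ∈ L, x - l ∈ K)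
    (hden : Dense (Prod.snd '' (L : Set (E₁ × E₂)))) {δ : ℝ} (hδ : 0 < δ)
    {n : ℕ} (hn : Module.finrank ℝ (E₁ × E₂) = n) :
    ∃ p : Fin n → E₁ × E₂, (∀ i, p i ∈ L) ∧ (∀ i, ‖(p i).2‖ < δ) ∧ LinearIndependent ℝ p := by
  have hspan : ⊤ ≤ Submodule.span ℝ {x | x ∈ L ∧ ‖x.2‖ < δ} := by
    rw [← L.span_eq_top_of_isCompact_sub_mem hK hrep, Submodule.span_le]
    exact fun l hl => mem_span_small_snd hden hδ hl
  let b := Module.Basis.ofSpan hspan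
  have : Finite _ := Module.Finite.finite_basis b
  let e := Finite.equivFinOfCardEq ((Module.finrank_eq_nat_card_basis b).symm.trans hn)
  have hb i : b (e.symm i) ∈ {x | x ∈ L ∧ ‖x.2‖ < δ} :=
    Module.Basis.ofSpan_subset hspan ⟨_, rfl⟩
  exact ⟨fun i => b (e.symm i), fun i => (hb i).1, fun i => (hb i).2,
    b.linearIndependent.comp _ e.symm.injective⟩

theorem exists_cutProject_box [FiniteDimensional ℝ E₁] [FiniteDimensional ℝ E₂]
    {K : Set (E₁ × E₂)} (hK : IsCompact K) (hrep : ∀ x, ∃ l ∈ L, x - l ∈ K)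
    (hden : Dense (Prod.snd '' (L : Set (E₁ × E₂)))) (w : E₂) {ε : ℝ} (hε : 0 < ε) (M : ℕ)
    {n : ℕ} (hn : Module.finrank ℝ (E₁ × E₂) = n) :
    ∃ R > 0, ∃ p : Fin n → E₁ × E₂, (∀ i, p i ∈ L) ∧ LinearIndependent ℝ p ∧
      ∀ y : E₁, ∃ s : E₁, ∀ c : Fin n → ℕ, (∀ i, c i ≤ M) →
        s + ∑ i, (c i : ℝ) • (p i).1 ∈ cutProject L (ball w ε) ∩ ball y R := by
  set δ := ε / (2 * (M * n + 1))
  obtain ⟨p, hpL, hpδ, hp⟩ := exists_linearIndependent_small_snd hK hrep hden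
    (by positivity : 0 < δ) hn
  have hsnd : M * ∑ i, ‖(p i).2‖ < ε / 2 := by
    calc M * ∑ i, ‖(p i).2‖ ≤ M * (n * δ) := by
          gcongr; exact (Finset.sum_le_sum fun i _ => (hpδ i).le).trans_eq (by simp)
      _ < ε / 2 := by
          rw [← mul_assoc, mul_div_assoc', div_lt_div_iff₀ (by positivity) (by positivity)]
          nlinarith
  obtain ⟨C, hC⟩ := exists_mem_dist_snd_lt_dist_fst_le hK hrep hden w (half_pos hε)
  have hC₀ : 0 ≤ C := by obtain ⟨_, _, _, h⟩ := hC 0; exact dist_nonneg.trans h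
  refine ⟨C + M * ∑ i, ‖(p i).1‖ + 1, by positivity, p, hpL, hp, fun y => ?_⟩
  obtain ⟨s, hsL, hs₂, hs₁⟩ := hC y
  refine ⟨s.1, fun c hc => ⟨⟨s.2 + ∑ i, (c i : ℝ) • (p i).2, ?_, ?_⟩, ?_⟩⟩
  · calc dist (s.2 + ∑ i, (c i : ℝ) • (p i).2) w ≤ dist s.2 w + M * ∑ i, ‖(p i).2‖ :=
          dist_add_sum_natCast_smul_le hc _ _ _
      _ < ε := by linarith
  · have : s + ∑ i, c i • p i ∈ L := L.add_mem hsL (L.sum_mem fun i _ => L.nsmul_mem (hpL i) _)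
    convert this using 1
    ext <;> simp [Nat.cast_smul_eq_nsmul, Prod.fst_sum, Prod.snd_sum]
  · calc dist (s.1 + ∑ i, (c i : ℝ) • (p i).1) y ≤ dist s.1 y + M * ∑ i, ‖(p i).1‖ :=
          dist_add_sum_natCast_smul_le hc _ _ _
      _ < C + M * ∑ i, ‖(p i).1‖ + 1 := by linarith

end CutAndProject

theorem stmt_10_general {d m : ℕ}
    (L : AddSubgroup (EuclideanSpace ℝ (Fin d) × EuclideanSpace ℝ (Fin m)))
    (hL : IsCPS d m L) (W : Set (EuclideanSpace ℝ (Fin m)))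
    (hWi : (interior W).Nonempty) (r k : ℕ) :
    ∃ R > (0 : ℝ), ∀ χ : EuclideanSpace ℝ (Fin d) → Fin r,
      ∀ y : EuclideanSpace ℝ (Fin d),
      ∃ (s : EuclideanSpace ℝ (Fin d)) (v : Fin (d + m) → EuclideanSpace ℝ (Fin d)),
        LinearIndependent ℤ v ∧
        (∀ c : Fin (d + m) → ℕ, (∀ i, c i ≤ k) →
          s + ∑ i, (c i : ℝ) • v i ∈ cutProject L W ∩ Metric.ball y R) ∧
        ∃ col : Fin r, ∀ c : Fin (d + m) → ℕ, (∀ i, c i ≤ k) →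
          χ (s + ∑ i, (c i : ℝ) • v i) = col := by
  obtain ⟨⟨-, K, hK, hrep⟩, hinj, hden⟩ := hL
  obtain ⟨w, hw⟩ := hWi
  obtain ⟨ε, hε, hball⟩ := Metric.isOpen_iff.1 isOpen_interior w hw
  obtain ⟨M, hM⟩ := exists_mono_homothetic_copy_bounded (Fin (d + m)) (Fin r) k
  obtain ⟨R, hR, p, hpL, hp, hbox⟩ :=
    exists_cutProject_box hK hrep hden w hε M (n := d + m) (by simp)
  refine ⟨R, hR, fun χ y => ?_⟩
  obtain ⟨s, hs⟩ := hbox y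
  obtain ⟨a, ha, b, col, hb, hmono⟩ := hM fun c => χ (s + ∑ i, (c i : ℝ) • (p i).1)
  refine ⟨s + ∑ i, (b i : ℝ) • (p i).1, fun i => (a : ℝ) • (p i).1, ?_, fun c hc => ?_, col,
    fun c hc => ?_⟩
  · exact (linearIndependent_int_fst hinj hpL hp).real_smul (by positivity)
  · rw [add_sum_natCast_smul_homothety]
    obtain ⟨⟨z, hz, hzL⟩, hy⟩ :=
      hs (a • c + b) fun i => (hb i).trans' (Nat.add_le_add_right (Nat.mul_le_mul_left a (hc i)) _)
    exact ⟨⟨z, interior_subset (hball hz), hzL⟩, hy⟩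
  · rw [add_sum_natCast_smul_homothety]
    exact hmono c hc

/-- colouring version for fully Euclidean model sets: for every
`r, k ∈ ℕ` there is `R > 0` such that for every colouring of `Λ(W)` with `r` colours
and every `y ∈ ℝ^d`, the set `Λ(W) ∩ B_R(y)` contains a monochromatic li-arithmetic
progression of length `k` and rank `d + m`. -/
theorem stmt_10 {d m : ℕ}
    (L : AddSubgroup (EuclideanSpace ℝ (Fin d) × EuclideanSpace ℝ (Fin m)))
    (hL : IsCPS d m L) (W : Set (EuclideanSpace ℝ (Fin m)))
    (hWc : IsCompact (closure W)) (hWi : (interior W).Nonempty) (r k : ℕ) :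
    ∃ R > (0 : ℝ), ∀ χ : EuclideanSpace ℝ (Fin d) → Fin r,
      ∀ y : EuclideanSpace ℝ (Fin d),
      ∃ (s : EuclideanSpace ℝ (Fin d)) (v : Fin (d + m) → EuclideanSpace ℝ (Fin d)),
        LinearIndependent ℤ v ∧
        (∀ c : Fin (d + m) → ℕ, (∀ i, c i ≤ k) →
          s + ∑ i, (c i : ℝ) • v i ∈ cutProject L W ∩ Metric.ball y R) ∧
        ∃ col : Fin r, ∀ c : Fin (d + m) → ℕ, (∀ i, c i ≤ k) →
          χ (s + ∑ i, (c i : ℝ) • v i) = col :=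
  stmt_10_general L hL W hWi r k
end

section
/- Let Λ, Γ ⊆ ℝ^d be Meyer sets which are equivalent by finite translations, i.e., there exists a finite set F ⊆ ℝ^d with Λ ⊆ Γ + F and Γ ⊆ Λ + F. Then for every k ∈ ℕ: Λ contains li-arithmetic progressions of rank k and every length N ∈ ℕ if and only if Γ contains li-arithmetic progressions of rank k and every length N ∈ ℕ. In particular, aprank(Λ) = aprank(Γ). -/
open scoped Pointwise

/-!
Let `pₘ(c) = sₘ + ∑ cᵢ rᵢ⁽ᵐ⁾` be an li-progression of length `m` in `Λ`. Colour the grid point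
`c ∈ ℕᵏ` by the (finitely many possible) sets of `f ∈ F` with `pₘ(c) - f ∈ Γ`. By compactness these
colourings have a limit colouring of all of `ℕᵏ`, and Gallai's theorem gives a monochromatic
homothetic copy `a • [0,N]ᵏ + b` of a box in it. For a large `m` agreeing with the limit on this
copy, a common `f` translates the sub-progression `c ↦ pₘ(a • c + b)` into `Γ`, and it is again an
li-progression, with ratios `a • rᵢ⁽ᵐ⁾`.
-/

open Filter

theorem exists_frequently_eqOn_of_finite {X κ : Type*} [Finite κ] (C : ℕ → X → κ) :
    ∃ C' : X → κ, ∀ T : Set X, T.Finite → ∃ᶠ M in atTop, Set.EqOn (C M) C' T := by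
  let 𝒰 : Ultrafilter ℕ := .of atTop
  have hlim : ∀ x, ∃ y, ∀ᶠ M in 𝒰, C M x = y := fun x => by
    obtain ⟨y, hy⟩ := (𝒰.map (C · x)).eq_pure_of_finite
    exact ⟨y, show {y} ∈ 𝒰.map (C · x) by rw [hy]; exact mem_pure.2 rfl⟩
  choose C' hC' using hlim
  refine ⟨C', fun T hT => ?_⟩
  have : ∀ᶠ M in 𝒰, Set.EqOn (C M) C' T := (eventually_all_finite hT).2 fun x _ => hC' x
  exact this.frequently.filter_mono (Ultrafilter.of_le _)

theorem add_sum_homothetic_smul {E ι : Type*} [AddCommGroup E] [Module ℝ E] [Fintype ι]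
    (s : E) (r : ι → E) (a : ℕ) (b c : ι → ℕ) :
    s + ∑ i, ((a • c + b) i : ℝ) • r i =
      (s + ∑ i, (b i : ℝ) • r i) + ∑ i, (c i : ℝ) • ((a : ℝ) • r i) := by
  simp only [Pi.add_apply, Pi.smul_apply, smul_eq_mul, Nat.cast_add, Nat.cast_mul, add_smul,
    mul_smul, Finset.sum_add_distrib, smul_comm (a : ℝ)]
  abel

theorem LinearIndependent.nat_smul_real {E ι : Type*} [AddCommGroup E] [Module ℝ E]
    {r : ι → E} (hr : LinearIndependent ℤ r) {a : ℕ} (ha : a ≠ 0) :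
    LinearIndependent ℤ fun i => (a : ℝ) • r i :=
  hr.map' ((LinearMap.lsmul ℝ E (a : ℝ)).restrictScalars ℤ)
    (LinearMap.ker_eq_bot.2 (smul_right_injective E (Nat.cast_ne_zero.2 ha)))

theorem HasLiAP.of_homothetic {d k N a : ℕ} {Λ : Set (EuclideanSpace ℝ (Fin d))}
    {s : EuclideanSpace ℝ (Fin d)} {r : Fin k → EuclideanSpace ℝ (Fin d)}
    (hr : LinearIndependent ℤ r) (ha : a ≠ 0) (b : Fin k → ℕ)
    (h : ∀ c : Fin k → ℕ, (∀ i, c i ≤ N) → s + ∑ i, ((a • c + b) i : ℝ) • r i ∈ Λ) :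
    HasLiAP Λ k N :=
  ⟨s + ∑ i, (b i : ℝ) • r i, fun i => (a : ℝ) • r i, hr.nat_smul_real ha,
    fun c hc => add_sum_homothetic_smul s r a b c ▸ h c hc⟩

theorem forall_hasLiAP_of_subset_add {d k : ℕ} {Λ Γ F : Set (EuclideanSpace ℝ (Fin d))}
    (hF : F.Finite) (hΛΓ : Λ ⊆ Γ + F) (hΛ : ∀ N, HasLiAP Λ k N) : ∀ N, HasLiAP Γ k N := by
  have : Finite F := hF
  choose s r hr hmem using hΛ
  let χ : ℕ → (Fin k → ℕ) → Set F := fun M c => {f | s M + ∑ i, (c i : ℝ) • r M i - f ∈ Γ}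
  obtain ⟨χ', hχ'⟩ := exists_frequently_eqOn_of_finite χ
  intro N
  let S : Finset (Fin k → ℕ) := Fintype.piFinset fun _ => Finset.range (N + 1)
  have mem_S {c : Fin k → ℕ} : c ∈ S ↔ ∀ i, c i ≤ N := by simp [S]
  obtain ⟨a, ha, b, y, hy⟩ := Combinatorics.exists_mono_homothetic_copy S χ'
  obtain ⟨M, hM, hχM⟩ := frequently_atTop.1
    (hχ' ((a • · + b) '' S) (S.finite_toSet.image _)) (a * N + Finset.univ.sup b)
  have hcol {c} (hc : ∀ i, c i ≤ N) : χ M (a • c + b) = y := by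
    rw [hχM ⟨c, mem_S.2 hc, rfl⟩, hy c (mem_S.2 hc)]
  have hΛmem {c : Fin k → ℕ} (hc : ∀ i, c i ≤ N) :
      s M + ∑ i, ((a • c + b) i : ℝ) • r M i ∈ Λ := by
    refine hmem M _ fun i => ?_
    have := Finset.le_sup (f := b) (Finset.mem_univ i)
    have := Nat.mul_le_mul_left a (hc i)
    simp only [Pi.add_apply, Pi.smul_apply, smul_eq_mul]
    omega
  obtain ⟨f, hf⟩ : y.Nonempty := by
    rw [← hcol fun _ => Nat.zero_le N]
    obtain ⟨g, hg, f, hf, hgf⟩ := hΛΓ (hΛmem fun _ => Nat.zero_le N)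
    exact ⟨⟨f, hf⟩, show _ - f ∈ Γ by rwa [← hgf, add_sub_cancel_right]⟩
  refine HasLiAP.of_homothetic (s := s M - f) (hr M) ha.ne' b fun c hc => ?_
  have hf' : f ∈ χ M (a • c + b) := hcol hc ▸ hf
  rwa [sub_add_eq_add_sub]

theorem stmt_11_general {d : ℕ} (Λ Γ : Set (EuclideanSpace ℝ (Fin d)))
    (F : Set (EuclideanSpace ℝ (Fin d))) (hF : F.Finite)
    (h1 : Λ ⊆ Γ + F) (h2 : Γ ⊆ Λ + F) (k : ℕ) :
    (∀ N : ℕ, HasLiAP Λ k N) ↔ (∀ N : ℕ, HasLiAP Γ k N) :=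
  ⟨forall_hasLiAP_of_subset_add hF h1, forall_hasLiAP_of_subset_add hF h2⟩

/-- if two Meyer sets `Λ, Γ ⊆ ℝ^d` are equivalent by finite
translations, then for every `k`, `Λ` contains li-arithmetic progressions of rank
`k` and every length iff `Γ` does. In particular `aprank Λ = aprank Γ`. -/
theorem stmt_11 {d : ℕ} (Λ Γ : Set (EuclideanSpace ℝ (Fin d)))
    (hΛ : IsMeyerSet Λ) (hΓ : IsMeyerSet Γ)
    (F : Set (EuclideanSpace ℝ (Fin d))) (hF : F.Finite)
    (h1 : Λ ⊆ Γ + F) (h2 : Γ ⊆ Λ + F) (k : ℕ) :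
    (∀ N : ℕ, HasLiAP Λ k N) ↔ (∀ N : ℕ, HasLiAP Γ k N) :=
  stmt_11_general Λ Γ F hF h1 h2 k
end

section
/- Let Λ ⊆ ℝ^d be a Meyer set, F ⊆ ℝ^d finite, (ℝ^d, ℝ^m, ℒ) a fully Euclidean cut-and-project scheme, and W ⊆ ℝ^m precompact with nonempty interior, such that Λ ⊆ Λ(W) + F. Then Λ and Λ(W) are equivalent by finite translations, i.e., there exists a finite set F' ⊆ ℝ^d such that Λ ⊆ Λ(W) + F' and Λ(W) ⊆ Λ + F'. -/
open scoped Pointwise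

/-!
Since `W - W` is bounded and `ℒ` is discrete, `Λ(W) - Λ(W) ⊆ Λ(W - W)` meets every bounded set
in finitely many points, hence so does `Λ(W) - Λ ⊆ Λ(W) - Λ(W) - F`. As `Λ` is relatively dense,
every point of `Λ(W)` is a point of `Λ` plus one of the finitely many points of `Λ(W) - Λ` in a
fixed ball around `0`.
-/

open Set Bornology Metric

theorem cutProject_sub_cutProject_subset {α β : Type*} [AddCommGroup α] [AddCommGroup β]
    (L : AddSubgroup (α × β)) (W W' : Set β) :
    cutProject L W - cutProject L W' ⊆ cutProject L (W - W') := by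
  rintro _ ⟨x, ⟨y, hy, hxy⟩, x', ⟨y', hy', hxy'⟩, rfl⟩
  exact ⟨y - y', sub_mem_sub hy hy', L.sub_mem hxy hxy'⟩

theorem finite_cutProject_inter_of_isBounded {α β : Type*}
    [NormedAddCommGroup α] [NormedAddCommGroup β] [ProperSpace α] [ProperSpace β]
    (L : AddSubgroup (α × β)) [DiscreteTopology L] {W : Set β} {B : Set α}
    (hW : IsBounded W) (hB : IsBounded B) :
    (cutProject L W ∩ B).Finite := by
  have hfin : ((B ×ˢ W) ∩ (L : Set (α × β))).Finite :=
    finite_isBounded_inter_isClosed DiscreteTopology.isDiscrete (hB.prod hW)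
      AddSubgroup.isClosed_of_discrete
  refine (hfin.image Prod.fst).subset ?_
  rintro x ⟨⟨y, hy, hxy⟩, hx⟩
  exact ⟨(x, y), ⟨⟨hx, hy⟩, hxy⟩, rfl⟩

theorem finite_sub_inter_of_finite_inter {E : Type*} [SeminormedAddCommGroup E] {S F : Set E}
    (hS : ∀ B, IsBounded B → (S ∩ B).Finite) (hF : F.Finite) {B : Set E} (hB : IsBounded B) :
    ((S - F) ∩ B).Finite := by
  have hcover : (S - F) ∩ B ⊆ ⋃ f ∈ F, (· - f) '' (S ∩ (B + {f})) := by
    rintro _ ⟨⟨s, hs, f, hf, rfl⟩, hsf⟩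
    exact mem_biUnion hf ⟨s, ⟨hs, s - f, hsf, f, rfl, sub_add_cancel s f⟩, rfl⟩
  exact (hF.biUnion fun f _ ↦ (hS _ (hB.add isBounded_singleton)).image _).subset hcover

theorem subset_add_sub_inter_ball {E : Type*} [SeminormedAddCommGroup E] {Λ : Set E} {R : ℝ}
    (hΛ : ∀ x : E, ∃ y ∈ Λ, y ∈ ball x R) (D : Set E) :
    D ⊆ Λ + (D - Λ) ∩ ball 0 R := by
  intro x hx
  obtain ⟨y, hy, hyx⟩ := hΛ x
  refine ⟨y, hy, x - y, ⟨sub_mem_sub hx hy, ?_⟩, add_sub_cancel y x⟩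
  rwa [mem_ball_zero_iff, ← dist_eq_norm, ← mem_ball']

theorem stmt_12_general {d m : ℕ} (Λ : Set (EuclideanSpace ℝ (Fin d))) (hΛ : IsMeyerSet Λ)
    (L : AddSubgroup (EuclideanSpace ℝ (Fin d) × EuclideanSpace ℝ (Fin m)))
    (hL : IsCPS d m L) (W : Set (EuclideanSpace ℝ (Fin m)))
    (hWc : IsCompact (closure W))
    (F : Set (EuclideanSpace ℝ (Fin d))) (hF : F.Finite)
    (hsub : Λ ⊆ cutProject L W + F) :
    ∃ F' : Set (EuclideanSpace ℝ (Fin d)), F'.Finite ∧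
      Λ ⊆ cutProject L W + F' ∧ cutProject L W ⊆ Λ + F' := by
  obtain ⟨R, -, hdense⟩ := hΛ.1
  have := hL.1.1
  have hW : IsBounded W := hWc.isBounded.subset subset_closure
  have hdiff : ∀ B, IsBounded B → ((cutProject L W - cutProject L W) ∩ B).Finite :=
    fun B hB ↦ (finite_cutProject_inter_of_isBounded L (hW.sub hW) hB).subset
      (inter_subset_inter_left B (cutProject_sub_cutProject_subset L W W))
  have hshort : ((cutProject L W - Λ) ∩ ball 0 R).Finite := by
    refine (finite_sub_inter_of_finite_inter hdiff hF isBounded_ball).subset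
      (inter_subset_inter_left _ ?_)
    rw [← sub_add_eq_sub_sub]
    exact sub_subset_sub_left hsub
  refine ⟨F ∪ (cutProject L W - Λ) ∩ ball 0 R, hF.union hshort,
    hsub.trans (add_subset_add_left subset_union_left), ?_⟩
  exact (subset_add_sub_inter_ball hdense _).trans (add_subset_add_left subset_union_right)

/-- if a Meyer set `Λ ⊆ ℝ^d` satisfies `Λ ⊆ Λ(W) + F` for a fully
Euclidean model set `Λ(W)` and a finite set `F`, then `Λ` and `Λ(W)` are equivalent
by finite translations. -/
theorem stmt_12 {d m : ℕ} (Λ : Set (EuclideanSpace ℝ (Fin d))) (hΛ : IsMeyerSet Λ)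
    (L : AddSubgroup (EuclideanSpace ℝ (Fin d) × EuclideanSpace ℝ (Fin m)))
    (hL : IsCPS d m L) (W : Set (EuclideanSpace ℝ (Fin m)))
    (hWc : IsCompact (closure W)) (hWi : (interior W).Nonempty)
    (F : Set (EuclideanSpace ℝ (Fin d))) (hF : F.Finite)
    (hsub : Λ ⊆ cutProject L W + F) :
    ∃ F' : Set (EuclideanSpace ℝ (Fin d)), F'.Finite ∧
      Λ ⊆ cutProject L W + F' ∧ cutProject L W ⊆ Λ + F' :=
  stmt_12_general Λ hΛ L hL W hWc F hF hsub
end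

section
/- Let Λ ⊆ ℝ^d be a Meyer set, let (ℝ^d, ℝ^m, ℒ) be a fully Euclidean cut-and-project scheme, W ⊆ ℝ^m precompact with nonempty interior, and F ⊆ ℝ^d finite, such that Λ ⊆ Λ(W) + F. Then aprank(Λ) = d + m. More precisely: (i) for each N ∈ ℕ there exists R > 0 such that for all y ∈ ℝ^d, the set Λ ∩ B_R(y) contains an li-arithmetic progression of length N and rank d + m; and (ii) if s, r₁, …, r_k ∈ ℝ^d with r₁, …, r_k linearly independent over ℤ and k > d + m, then for some N ∈ ℕ not all points s + ∑_{i=1}^{k} cᵢrᵢ (integers 0 ≤ cᵢ ≤ N) lie in Λ. -/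
open scoped Pointwise

/-!
(i) Since `ℒ` spans `ℝ^d × ℝ^m` and `π₂(ℒ)` is dense, `ℒ` contains `d + m` linearly independent
vectors `tᵢ` with tiny internal parts, so a grid `a + ∑ cᵢ tᵢ` (`0 ≤ cᵢ ≤ M`) based at a lattice
point `a` with `a.2 ∈ W` keeps bounded internal parts. A point of `Λ` near each grid point then
differs from it by one of finitely many offsets. Colouring the grid by these offsets, Gallai's
theorem, in the finite form obtained from Hales–Jewett, gives a monochromatic homothetic copy of
`{0, …, N}^(d+m)`: an li-arithmetic progression in `Λ`, its ratios being independent because `π₁`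
is injective on `ℒ`.

(ii) If `s + j rᵢ ∈ Λ ⊆ Λ(W) + F` for all `j`, two of these points share their element of `F`, so
a nonzero multiple of each `rᵢ` is the first coordinate of a point of `ℒ`. These lattice points
are `ℤ`-independent, and a discrete subgroup of `ℝ^(d+m)` has rank at most `d + m`.
-/

open Module

open Finset in
theorem exists_mono_homothetic_box (n N : ℕ) (κ : Type*) [Finite κ] :
    ∃ M : ℕ, ∀ C : (Fin n → ℕ) → κ, ∃ k > 0, ∃ (b : Fin n → ℕ) (x : κ),
      ∀ c : Fin n → ℕ, (∀ i, c i ≤ N) →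
        (∀ i, k * c i + b i ≤ M) ∧ C (fun i => k * c i + b i) = x := by
  classical
  obtain ⟨ι, _, hι⟩ := Combinatorics.Line.exists_mono_in_high_dimension (Fin n → Fin (N + 1)) κ
  let σ : (ι → Fin n → Fin (N + 1)) → Fin n → ℕ := fun v i => ∑ j, (v j i : ℕ)
  have hσ : ∀ v i, σ v i ≤ Fintype.card ι * N := fun v i =>
    (sum_le_sum fun j _ => Nat.le_of_lt_succ (v j i).2).trans (by simp)
  refine ⟨Fintype.card ι * N, fun C => ?_⟩
  obtain ⟨l, x, hl⟩ := hι (C ∘ σ)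
  let k := #{j | l.idxFun j = none}
  let b : Fin n → ℕ := fun i => ∑ j, ((l.idxFun j).map fun a => (a i : ℕ)).getD 0
  -- along the line, the `k` moving coordinates contribute `k * c` to `σ` and the fixed ones `b`
  have hline : ∀ c : Fin n → ℕ, (hc : ∀ i, c i ≤ N) →
      σ (l fun i => ⟨c i, Nat.lt_succ_of_le (hc i)⟩) = fun i => k * c i + b i := by
    intro c hc
    funext i
    have hj : ∀ j, ((l (fun i => ⟨c i, Nat.lt_succ_of_le (hc i)⟩) j i : Fin (N + 1)) : ℕ) =
        (if l.idxFun j = none then c i else 0) + ((l.idxFun j).map fun a => (a i : ℕ)).getD 0 := by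
      intro j
      cases h : l.idxFun j <;> simp [h]
    simp only [σ, hj, sum_add_distrib, sum_ite, sum_const_zero, add_zero, sum_const, smul_eq_mul,
      k, b]
  have hkpos : 0 < k := card_pos.2 ⟨_, mem_filter.2 ⟨mem_univ _, l.proper.choose_spec⟩⟩
  refine ⟨k, hkpos, b, x, fun c hc => ⟨fun i => ?_, ?_⟩⟩
  · exact (congrFun (hline c hc) i).symm.le.trans (hσ _ i)
  · rw [← hline c hc]; exact hl _

theorem exists_homothetic_box_of_forall_exists (n N : ℕ) (κ : Type*) [Finite κ] :
    ∃ M : ℕ, ∀ P : (Fin n → ℕ) → κ → Prop, (∀ c, (∀ i, c i ≤ M) → ∃ x, P c x) →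
      ∃ k > 0, ∃ (b : Fin n → ℕ) (x : κ), ∀ c : Fin n → ℕ, (∀ i, c i ≤ N) →
        (∀ i, k * c i + b i ≤ M) ∧ P (fun i => k * c i + b i) x := by
  classical
  obtain ⟨M, hM⟩ := exists_mono_homothetic_box n N κ
  refine ⟨M, fun P hP => ?_⟩
  have : Nonempty κ := let ⟨x, _⟩ := hP 0 fun _ => M.zero_le; ⟨x⟩
  let C c := if h : ∃ x, P c x then h.choose else Classical.arbitrary κ
  have hC : ∀ c, (∀ i, c i ≤ M) → P c (C c) := fun c hc => by
    simp only [C, dif_pos (hP c hc)]; exact (hP c hc).choose_spec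
  obtain ⟨k, hk, b, x, hx⟩ := hM C
  exact ⟨k, hk, b, x, fun c hc => ⟨(hx c hc).1, (hx c hc).2 ▸ hC _ (hx c hc).1⟩⟩

theorem LinearIndependent.smul_of_ne_zero {ι R M : Type*} [CommRing R] [NoZeroDivisors R]
    [AddCommGroup M] [Module R M] {v : ι → M} (hv : LinearIndependent R v) {a : ι → R}
    (ha : ∀ i, a i ≠ 0) : LinearIndependent R fun i => a i • v i := by
  refine linearIndependent_iff'.2 fun s g hg i hi => ?_
  have := linearIndependent_iff'.1 hv s (fun i => g i * a i) (by simpa [mul_smul] using hg) i hi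
  exact (mul_eq_zero.1 this).resolve_right (ha i)

theorem norm_sum_natCast_smul_le {ι E : Type*} [Fintype ι] [SeminormedAddCommGroup E]
    [NormedSpace ℝ E] {M : ℕ} {c : ι → ℕ} (hc : ∀ i, c i ≤ M) (v : ι → E) :
    ‖∑ i, (c i : ℝ) • v i‖ ≤ M * ∑ i, ‖v i‖ := by
  rw [Finset.mul_sum]
  refine (norm_sum_le _ _).trans (Finset.sum_le_sum fun i _ => ?_)
  rw [norm_smul, Real.norm_natCast]
  gcongr
  exact hc i

theorem sum_natCast_smul_homothety {ι V : Type*} [Fintype ι] [AddCommGroup V] [Module ℝ V]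
    (s : V) (v : ι → V) (k : ℕ) (b c : ι → ℕ) :
    s + ∑ i, ((k * c i + b i : ℕ) : ℝ) • v i
      = (s + ∑ i, (b i : ℝ) • v i) + ∑ i, (c i : ℝ) • ((k : ℝ) • v i) := by
  simp only [Nat.cast_add, Nat.cast_mul, add_smul, mul_smul, Finset.sum_add_distrib]
  rw [← Finset.sum_congr rfl fun i _ => smul_comm (k : ℝ) (c i : ℝ) (v i)]
  abel

theorem span_eq_top_of_forall_exists_sub_mem {E : Type*} [NormedAddCommGroup E]
    [NormedSpace ℝ E] [FiniteDimensional ℝ E] {L : AddSubgroup E} {K : Set E}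
    (hK : IsCompact K) (hrep : ∀ x, ∃ l ∈ L, x - l ∈ K) :
    Submodule.span ℝ (L : Set E) = ⊤ := by
  set S := Submodule.span ℝ (L : Set E)
  have : IsClosed (S : Set E) := S.closed_of_finiteDimensional
  -- otherwise `E ⧸ S` is a nontrivial normed space, yet it is the image of the bounded set `K`
  by_contra hS
  have : Nontrivial (E ⧸ S) := Submodule.Quotient.nontrivial_iff.2 hS
  obtain ⟨C, hC⟩ := hK.isBounded.exists_norm_le
  refine NormedSpace.unbounded_univ ℝ (E ⧸ S) (isBounded_iff_forall_norm_le.2 ⟨C, ?_⟩)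
  rintro z -
  obtain ⟨x, rfl⟩ := S.mkQ_surjective z
  obtain ⟨l, hl, hxl⟩ := hrep x
  have : S.mkQ x = S.mkQ (x - l) := by
    rw [map_sub, S.mkQ_apply l, (Submodule.Quotient.mk_eq_zero S).2 (Submodule.subset_span hl),
      sub_zero]
  rw [this]
  exact (Submodule.Quotient.norm_mk_le _ _).trans (hC _ hxl)

theorem card_le_finrank_of_linearIndependent {E : Type*} [NormedAddCommGroup E]
    [NormedSpace ℝ E] [FiniteDimensional ℝ E] {L : AddSubgroup E} [DiscreteTopology L]
    (hspan : Submodule.span ℝ (L : Set E) = ⊤) {k : ℕ} {q : Fin k → E} (hqL : ∀ i, q i ∈ L)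
    (hq : LinearIndependent ℤ q) : k ≤ finrank ℝ E := by
  let L' := L.toIntSubmodule
  have : DiscreteTopology L' := ‹_›
  have : IsZLattice ℝ L' := ⟨hspan⟩
  have hq' : LinearIndependent ℤ fun i => (⟨q i, hqL i⟩ : L') :=
    LinearIndependent.of_comp L'.subtype hq
  simpa [ZLattice.rank ℝ L'] using hq'.fintype_card_le_finrank

theorem mem_closure_snd_norm_lt {A B : Type*} [AddCommGroup A] [NormedAddCommGroup B]
    [NormedSpace ℝ B] {L : AddSubgroup (A × B)} (hdense : Dense (Prod.snd '' (L : Set (A × B))))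
    {η : ℝ} (hη : 0 < η) {p : A × B} (hp : p ∈ L) :
    p ∈ AddSubgroup.closure {q | q ∈ L ∧ ‖q.2‖ < η} := by
  set S := AddSubgroup.closure {q | q ∈ L ∧ ‖q.2‖ < η}
  have hS : ∀ q ∈ L, ‖q.2‖ < η → q ∈ S := fun q hq hqη => AddSubgroup.subset_closure ⟨hq, hqη⟩
  have happrox : ∀ z : B, ∃ q ∈ L, ‖q.2 - z‖ < η / 4 := fun z => by
    obtain ⟨_, ⟨q, hq, rfl⟩, hzq⟩ := hdense.exists_dist_lt z (by positivity : (0 : ℝ) < η / 4)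
    exact ⟨q, hq, by rwa [dist_comm, dist_eq_norm] at hzq⟩
  obtain ⟨n, hn⟩ := exists_nat_gt (2 * ‖p.2‖ / η)
  have hn0 : (0 : ℝ) < n := lt_of_le_of_lt (by positivity) hn
  have hstep : ‖((n : ℝ)⁻¹) • p.2‖ < η / 2 := by
    rw [norm_smul, norm_inv, Real.norm_natCast, inv_mul_lt_iff₀ hn0]
    rw [div_lt_iff₀ hη] at hn; linarith
  -- lattice points whose internal parts follow the segment from `0` to `p.2` in steps shorter
  -- than `η / 2`: then `p` telescopes into lattice points with internal part shorter than `η`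
  choose ℓ hℓL hℓ using fun j : ℕ => happrox (((j : ℝ) / n) • p.2)
  have hfirst : ℓ 0 ∈ S := hS _ (hℓL 0) (by simpa using (hℓ 0).trans (by linarith))
  have hlast : p - ℓ n ∈ S := hS _ (sub_mem hp (hℓL n)) <| by
    rw [Prod.snd_sub, norm_sub_rev]
    simpa [div_self hn0.ne'] using (hℓ n).trans (by linarith)
  have hdiff : ∀ j, ℓ (j + 1) - ℓ j ∈ S := fun j => hS _ (sub_mem (hℓL _) (hℓL _)) <| by
    have hsplit : (ℓ (j + 1) - ℓ j).2 = ((ℓ (j + 1)).2 - (((j + 1 : ℕ) : ℝ) / n) • p.2)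
        - ((ℓ j).2 - ((j : ℝ) / n) • p.2) + ((n : ℝ)⁻¹) • p.2 := by
      rw [Prod.snd_sub]; push_cast; module
    rw [hsplit]
    calc _ ≤ ‖(ℓ (j + 1)).2 - (((j + 1 : ℕ) : ℝ) / n) • p.2‖
          + ‖(ℓ j).2 - ((j : ℝ) / n) • p.2‖ + ‖((n : ℝ)⁻¹) • p.2‖ :=
          (norm_add_le _ _).trans (by gcongr; exact norm_sub_le _ _)
      _ < η / 4 + η / 4 + η / 2 := by gcongr <;> exact hℓ _
      _ = η := by ring
  have htel : p = (p - ℓ n) + ∑ j ∈ Finset.range n, (ℓ (j + 1) - ℓ j) + ℓ 0 := by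
    rw [Finset.sum_range_sub]; abel
  rw [htel]
  exact add_mem (add_mem hlast (sum_mem fun j _ => hdiff j)) hfirst

theorem exists_linearIndependent_snd_norm_lt {A B : Type*} [NormedAddCommGroup A]
    [NormedSpace ℝ A] [FiniteDimensional ℝ A] [NormedAddCommGroup B] [NormedSpace ℝ B]
    [FiniteDimensional ℝ B]
    {L : AddSubgroup (A × B)} (hspan : Submodule.span ℝ (L : Set (A × B)) = ⊤)
    (hdense : Dense (Prod.snd '' (L : Set (A × B)))) {n : ℕ} (hn : finrank ℝ (A × B) = n)
    {η : ℝ} (hη : 0 < η) :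
    ∃ t : Fin n → A × B, (∀ i, t i ∈ L ∧ ‖(t i).2‖ < η) ∧ LinearIndependent ℝ t := by
  have hS : ⊤ ≤ Submodule.span ℝ {q | q ∈ L ∧ ‖q.2‖ < η} := by
    rw [← hspan, Submodule.span_le]
    intro p hp
    exact AddSubgroup.closure_le (K := (Submodule.span ℝ _).toAddSubgroup) |>.2
      Submodule.subset_span (mem_closure_snd_norm_lt hdense hη hp)
  let b := Basis.ofSpan hS
  let b' := b.reindex (b.indexEquiv (Module.finBasisOfFinrankEq ℝ (A × B) hn))
  refine ⟨b', fun i => Basis.ofSpan_subset hS ?_, b'.linearIndependent⟩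
  rw [← Basis.range_reindex]
  exact Set.mem_range_self i

theorem linearIndependent_fst_of_mem {A B ι : Type*} [AddCommGroup A] [Module ℝ A]
    [AddCommGroup B] [Module ℝ B] {L : AddSubgroup (A × B)}
    (hinj : ∀ p ∈ L, ∀ q ∈ L, p.1 = q.1 → p = q) {t : ι → A × B} (htL : ∀ i, t i ∈ L)
    (ht : LinearIndependent ℝ t) : LinearIndependent ℤ fun i => (t i).1 := by
  have hspan : Submodule.span ℤ (Set.range t) ≤ L.toIntSubmodule :=
    Submodule.span_le.2 (Set.range_subset_iff.2 htL)
  exact (ht.restrict_scalars' ℤ).map_injOn (LinearMap.fst ℤ A B)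
    fun p hp q hq => hinj p (hspan hp) q (hspan hq)

theorem add_sum_smul_mem_and_norm_snd_le {ι A B : Type*} [Fintype ι] [AddCommGroup A]
    [Module ℝ A] [SeminormedAddCommGroup B] [NormedSpace ℝ B] {L : AddSubgroup (A × B)}
    {a : A × B} (ha : a ∈ L) {t : ι → A × B} (ht : ∀ i, t i ∈ L) {M : ℕ} {c : ι → ℕ}
    (hc : ∀ i, c i ≤ M) :
    a + ∑ i, (c i : ℝ) • t i ∈ L ∧ ‖(a + ∑ i, (c i : ℝ) • t i).2‖ ≤ ‖a.2‖ + M * ∑ i, ‖(t i).2‖ := by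
  refine ⟨add_mem ha <| sum_mem fun i _ => ?_, ?_⟩
  · rw [Nat.cast_smul_eq_nsmul]; exact nsmul_mem (ht i) _
  · simp only [Prod.snd_add, Prod.snd_sum, Prod.smul_snd]
    exact (norm_add_le _ _).trans (add_le_add_right (norm_sum_natCast_smul_le hc _) _)

theorem exists_lattice_point_near {d : ℕ} {B : Type*} [AddCommGroup B]
    {Λ : Set (EuclideanSpace ℝ (Fin d))} (hΛ : RelativelyDense Λ)
    {L : AddSubgroup (EuclideanSpace ℝ (Fin d) × B)} {W : Set B}
    {F : Set (EuclideanSpace ℝ (Fin d))} (hF : F.Finite) (hsub : Λ ⊆ cutProject L W + F) :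
    ∃ R > (0 : ℝ), ∀ y, ∃ a ∈ L, a.2 ∈ W ∧ ‖a.1 - y‖ < R := by
  obtain ⟨R₀, hR₀, hΛ⟩ := hΛ
  obtain ⟨CF, hCF⟩ := hF.isBounded.exists_norm_le
  refine ⟨R₀ + max CF 0, by positivity, fun y => ?_⟩
  obtain ⟨x, hx, hxy⟩ := hΛ y
  obtain ⟨z, ⟨w, hw, hzw⟩, f, hf, rfl⟩ := hsub hx
  refine ⟨(z, w), hzw, hw, ?_⟩
  rw [Metric.mem_ball, dist_eq_norm] at hxy
  calc ‖z - y‖ = ‖(z + f - y) - f‖ := by abel_nf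
    _ ≤ ‖z + f - y‖ + ‖f‖ := norm_sub_le _ _
    _ < R₀ + max CF 0 := by linarith [hCF f hf, le_max_left CF 0]

theorem exists_finset_fst_add_mem {d : ℕ} {B : Type*} [NormedAddCommGroup B] [ProperSpace B]
    {Λ : Set (EuclideanSpace ℝ (Fin d))} (hΛ : RelativelyDense Λ)
    {L : AddSubgroup (EuclideanSpace ℝ (Fin d) × B)} [DiscreteTopology L] {W : Set B}
    (hW : Bornology.IsBounded W) {F : Set (EuclideanSpace ℝ (Fin d))} (hF : F.Finite)
    (hsub : Λ ⊆ cutProject L W + F) (C : ℝ) :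
    ∃ G : Finset (EuclideanSpace ℝ (Fin d)), ∀ p ∈ L, ‖p.2‖ ≤ C → ∃ u ∈ G, p.1 + u ∈ Λ := by
  obtain ⟨R₀, -, hΛ⟩ := hΛ
  -- a point of `Λ` near `p.1` lifts to a lattice point differing from `p` by an element of `K`
  set K := (Metric.ball 0 R₀ - F) ×ˢ (W - Metric.closedBall 0 C)
  have hK : Bornology.IsBounded K :=
    (Metric.isBounded_ball.sub hF.isBounded).prod (hW.sub Metric.isBounded_closedBall)
  have hD : (K ∩ L).Finite := Metric.finite_isBounded_inter_isClosed
    (isDiscrete_iff_discreteTopology.2 ‹_›) hK AddSubgroup.isClosed_of_discrete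
  have hG : (Prod.fst '' (K ∩ L) + F).Finite := (hD.image _).add hF
  refine ⟨hG.toFinset, fun p hp hpC => ?_⟩
  obtain ⟨x, hx, hxp⟩ := hΛ p.1
  obtain ⟨z, ⟨w, hw, hzw⟩, f, hf, rfl⟩ := hsub hx
  have hmemK : (z, w) - p ∈ K := by
    refine ⟨⟨z + f - p.1, by simpa [dist_eq_norm] using hxp, f, hf, by simp; abel⟩,
      w, hw, p.2, by simpa using hpC, rfl⟩
  refine ⟨((z, w) - p).1 + f, hG.mem_toFinset.2 ?_, by simpa [← add_assoc] using hx⟩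
  exact Set.add_mem_add ⟨_, ⟨hmemK, sub_mem hzw hp⟩, rfl⟩ hf

theorem exists_lattice_fst_eq_zsmul {A B : Type*} [AddCommGroup A] [Module ℝ A] [AddCommGroup B]
    {L : AddSubgroup (A × B)} {W : Set B} {F : Set A} (hF : F.Finite) {S : Set A}
    (hsub : S ⊆ cutProject L W + F) {s r : A} (hray : ∀ j : ℕ, s + (j : ℝ) • r ∈ S) :
    ∃ q ∈ L, ∃ m : ℤ, m ≠ 0 ∧ q.1 = m • r := by
  have hlift : ∀ j : ℕ, ∃ p ∈ L, ∃ f ∈ F, p.1 + f = s + (j : ℝ) • r := fun j => by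
    obtain ⟨z, ⟨w, -, hzw⟩, f, hf, hx⟩ := hsub (hray j)
    exact ⟨(z, w), hzw, f, hf, hx⟩
  choose p hpL f hf hpf using hlift
  -- two points of the ray use the same element of `F`
  obtain ⟨a, b, hab, hfab⟩ := hF.exists_lt_map_eq_of_forall_mem hf
  refine ⟨p b - p a, sub_mem (hpL b) (hpL a), (b : ℤ) - a, by omega, ?_⟩
  have : (p b - p a).1 = ((p b).1 + f b) - ((p a).1 + f a) := by rw [hfab, Prod.fst_sub]; abel
  rw [this, hpf, hpf, ← Int.cast_smul_eq_zsmul ℝ]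
  push_cast
  module

theorem exists_notMem_of_finrank_lt {A B : Type*} [NormedAddCommGroup A] [NormedSpace ℝ A]
    [FiniteDimensional ℝ A] [NormedAddCommGroup B] [NormedSpace ℝ B] [FiniteDimensional ℝ B]
    {L : AddSubgroup (A × B)} [DiscreteTopology L]
    (hspan : Submodule.span ℝ (L : Set (A × B)) = ⊤) {W : Set B} {F : Set A} (hF : F.Finite)
    {Λ : Set A} (hsub : Λ ⊆ cutProject L W + F) {k : ℕ} (hk : finrank ℝ (A × B) < k) (s : A)
    {r : Fin k → A} (hr : LinearIndependent ℤ r) :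
    ∃ (N : ℕ) (c : Fin k → ℕ), (∀ i, c i ≤ N) ∧ s + ∑ i, (c i : ℝ) • r i ∉ Λ := by
  by_contra! hall
  have hray : ∀ i (j : ℕ), s + (j : ℝ) • r i ∈ Λ := fun i j => by
    classical
    simpa [Pi.single_apply] using hall j (Pi.single i j) fun i' => by
      rw [Pi.single_apply]; split_ifs <;> omega
  choose q hqL m hm hq using fun i => exists_lattice_fst_eq_zsmul hF hsub (hray i)
  have hfst : LinearMap.fst ℤ A B ∘ q = fun i => m i • r i := funext hq
  have hqli : LinearIndependent ℤ q :=
    .of_comp (LinearMap.fst ℤ A B) (hfst ▸ hr.smul_of_ne_zero hm)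
  exact hk.not_ge (card_le_finrank_of_linearIndependent hspan hqL hqli)

theorem exists_liAP_mem_ball {d : ℕ} {B : Type*} [NormedAddCommGroup B] [NormedSpace ℝ B]
    [FiniteDimensional ℝ B] {Λ : Set (EuclideanSpace ℝ (Fin d))} (hΛ : RelativelyDense Λ)
    {L : AddSubgroup (EuclideanSpace ℝ (Fin d) × B)} [DiscreteTopology L]
    (hspan : Submodule.span ℝ (L : Set (EuclideanSpace ℝ (Fin d) × B)) = ⊤)
    (hinj : ∀ p ∈ L, ∀ q ∈ L, p.1 = q.1 → p = q)
    (hdense : Dense (Prod.snd '' (L : Set (EuclideanSpace ℝ (Fin d) × B))))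
    {W : Set B} (hW : Bornology.IsBounded W) {F : Set (EuclideanSpace ℝ (Fin d))}
    (hF : F.Finite) (hsub : Λ ⊆ cutProject L W + F) {n : ℕ}
    (hn : finrank ℝ (EuclideanSpace ℝ (Fin d) × B) = n) (N : ℕ) :
    ∃ R > (0 : ℝ), ∀ y : EuclideanSpace ℝ (Fin d),
      ∃ (s : EuclideanSpace ℝ (Fin d)) (r : Fin n → EuclideanSpace ℝ (Fin d)),
        LinearIndependent ℤ r ∧
        ∀ c : Fin n → ℕ, (∀ i, c i ≤ N) → s + ∑ i, (c i : ℝ) • r i ∈ Λ ∩ Metric.ball y R := by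
  obtain ⟨R, hR, hbase⟩ := exists_lattice_point_near hΛ hF hsub
  obtain ⟨CW, hCW⟩ := hW.exists_norm_le
  obtain ⟨G, hG⟩ := exists_finset_fst_add_mem hΛ hW hF hsub (CW + 1)
  obtain ⟨M, hM⟩ := exists_homothetic_box_of_forall_exists n N G
  obtain ⟨t, ht, hli⟩ := exists_linearIndependent_snd_norm_lt hspan hdense hn
    (by positivity : (0 : ℝ) < 1 / (n * M + 1))
  obtain ⟨CG, hCG⟩ := G.finite_toSet.isBounded.exists_norm_le
  refine ⟨R + max CG 0 + M * ∑ i, ‖(t i).1‖, by positivity, fun y => ?_⟩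
  obtain ⟨a, haL, haW, hay⟩ := hbase y
  have hsmall : (M : ℝ) * ∑ i, ‖(t i).2‖ ≤ 1 := by
    have hsum : ∑ i, ‖(t i).2‖ ≤ n * (1 / (n * M + 1)) := by
      simpa using Finset.sum_le_sum fun i (_ : i ∈ Finset.univ) => (ht i).2.le
    calc (M : ℝ) * ∑ i, ‖(t i).2‖ ≤ M * (n * (1 / (n * M + 1))) := by gcongr
      _ ≤ 1 := by rw [mul_one_div, ← mul_div_assoc, div_le_one (by positivity)]; linarith
  have hgrid : ∀ c : Fin n → ℕ, (∀ i, c i ≤ M) →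
      ∃ u : G, a.1 + u + ∑ i, (c i : ℝ) • (t i).1 ∈ Λ := fun c hc => by
    obtain ⟨hpL, hp2⟩ := add_sum_smul_mem_and_norm_snd_le haL (fun i => (ht i).1) hc
    obtain ⟨u, hu, hmem⟩ := hG _ hpL (hp2.trans (by linarith [hCW _ haW]))
    exact ⟨⟨u, hu⟩, by simpa [Prod.fst_sum, add_right_comm] using hmem⟩
  obtain ⟨k, hk, b, u, hku⟩ := hM _ hgrid
  refine ⟨a.1 + u + ∑ i, (b i : ℝ) • (t i).1, fun i => (k : ℝ) • (t i).1, ?_, fun c hc => ?_⟩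
  · have hkt : ∀ i, (k : ℝ) • t i ∈ L := fun i => by
      rw [Nat.cast_smul_eq_nsmul]; exact nsmul_mem (ht i).1 _
    exact linearIndependent_fst_of_mem (t := fun i => (k : ℝ) • t i) hinj hkt
      (hli.smul_of_ne_zero fun _ => by positivity)
  obtain ⟨hbox, hmem⟩ := hku c hc
  rw [← sum_natCast_smul_homothety]
  refine ⟨hmem, ?_⟩
  have hsplit : a.1 + u + ∑ i, ((k * c i + b i : ℕ) : ℝ) • (t i).1 - y
      = (a.1 - y) + u + ∑ i, ((k * c i + b i : ℕ) : ℝ) • (t i).1 := by abel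
  rw [Metric.mem_ball, dist_eq_norm, hsplit]
  refine norm_add₃_le.trans_lt ?_
  linarith [hCG _ u.2, le_max_left CG 0, norm_sum_natCast_smul_le hbox fun i => (t i).1]

theorem stmt_13_general {d m : ℕ} (Λ : Set (EuclideanSpace ℝ (Fin d))) (hΛ : IsMeyerSet Λ)
    (L : AddSubgroup (EuclideanSpace ℝ (Fin d) × EuclideanSpace ℝ (Fin m)))
    (hL : IsCPS d m L) (W : Set (EuclideanSpace ℝ (Fin m)))
    (hWc : IsCompact (closure W))
    (F : Set (EuclideanSpace ℝ (Fin d))) (hF : F.Finite)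
    (hsub : Λ ⊆ cutProject L W + F) :
    (∀ N : ℕ, ∃ R > (0 : ℝ), ∀ y : EuclideanSpace ℝ (Fin d),
      ∃ (s : EuclideanSpace ℝ (Fin d)) (r : Fin (d + m) → EuclideanSpace ℝ (Fin d)),
        LinearIndependent ℤ r ∧
        ∀ c : Fin (d + m) → ℕ, (∀ i, c i ≤ N) →
          s + ∑ i, (c i : ℝ) • r i ∈ Λ ∩ Metric.ball y R) ∧
    (∀ k : ℕ, d + m < k → ∀ (s : EuclideanSpace ℝ (Fin d))
        (r : Fin k → EuclideanSpace ℝ (Fin d)), LinearIndependent ℤ r →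
        ∃ (N : ℕ) (c : Fin k → ℕ), (∀ i, c i ≤ N) ∧
          s + ∑ i, (c i : ℝ) • r i ∉ Λ) := by
  obtain ⟨⟨hdisc, K, hK, hrep⟩, hinj, hdense⟩ := hL
  have hspan := span_eq_top_of_forall_exists_sub_mem hK hrep
  have hn : finrank ℝ (EuclideanSpace ℝ (Fin d) × EuclideanSpace ℝ (Fin m)) = d + m := by simp
  exact ⟨exists_liAP_mem_ball hΛ.1 hspan hinj hdense (hWc.isBounded.subset subset_closure) hF
      hsub hn,
    fun k hk s r hr => exists_notMem_of_finrank_lt hspan hF hsub (hn ▸ hk) s hr⟩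

/-- if `Λ ⊆ ℝ^d` is a Meyer set with `Λ ⊆ Λ(W) + F` for a fully
Euclidean model set `Λ(W)` in `(ℝ^d, ℝ^m, ℒ)` and a finite set `F`, then
`aprank Λ = d + m`. More precisely: (i) for each `N` there is `R > 0` such that
every ball `B_R(y)` contains an li-arithmetic progression of length `N` and rank
`d + m` lying inside `Λ`; (ii) no li-arithmetic progression of rank `k > d + m`
lies in `Λ` for every length. -/
theorem stmt_13 {d m : ℕ} (Λ : Set (EuclideanSpace ℝ (Fin d))) (hΛ : IsMeyerSet Λ)
    (L : AddSubgroup (EuclideanSpace ℝ (Fin d) × EuclideanSpace ℝ (Fin m)))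
    (hL : IsCPS d m L) (W : Set (EuclideanSpace ℝ (Fin m)))
    (hWc : IsCompact (closure W)) (hWi : (interior W).Nonempty)
    (F : Set (EuclideanSpace ℝ (Fin d))) (hF : F.Finite)
    (hsub : Λ ⊆ cutProject L W + F) :
    (∀ N : ℕ, ∃ R > (0 : ℝ), ∀ y : EuclideanSpace ℝ (Fin d),
      ∃ (s : EuclideanSpace ℝ (Fin d)) (r : Fin (d + m) → EuclideanSpace ℝ (Fin d)),
        LinearIndependent ℤ r ∧
        ∀ c : Fin (d + m) → ℕ, (∀ i, c i ≤ N) →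
          s + ∑ i, (c i : ℝ) • r i ∈ Λ ∩ Metric.ball y R) ∧
    (∀ k : ℕ, d + m < k → ∀ (s : EuclideanSpace ℝ (Fin d))
        (r : Fin k → EuclideanSpace ℝ (Fin d)), LinearIndependent ℤ r →
        ∃ (N : ℕ) (c : Fin k → ℕ), (∀ i, c i ≤ N) ∧
          s + ∑ i, (c i : ℝ) • r i ∉ Λ) :=
  stmt_13_general Λ hΛ L hL W hWc F hF hsub
end

section
/- Let Λ ⊆ ℝ^d be a Meyer set. Then aprank(Λ) ≥ d; that is, for every N ∈ ℕ there exist s ∈ ℝ^d and vectors r₁, …, r_d ∈ ℝ^d linearly independent over ℤ such that s + ∑_{i=1}^{d} cᵢrᵢ ∈ Λ for all integers 0 ≤ cᵢ ≤ N. -/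
/-!
Choose for every `z ∈ ℕ^d` a point `f z ∈ Λ` within `R` of `z`. The displacements `f z - z`
form a bounded set, so finitely many colors determine them up to a small error, and Gallai's
theorem yields a homothetic copy `a • {0, …, N + 1}^d + b` of a box on which they are almost
constant. On that copy, differences of `f` along parallel edges are differences of points of
`Λ` that almost agree; as `Λ - Λ` is uniformly discrete they agree, so `f` is affine there.
Its steps lie close to `a • eᵢ` with `a ≥ 1`, hence are linearly independent.
-/

open scoped Pointwise

open Metric Set

lemma UniformlyDiscrete.exists_eq_of_dist_lt {d : ℕ} {S : Set (EuclideanSpace ℝ (Fin d))}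
    (hS : UniformlyDiscrete S) : ∃ r > 0, ∀ u ∈ S, ∀ v ∈ S, dist u v < r → u = v := by
  obtain ⟨r, hr, hsub⟩ := hS
  exact ⟨r, hr, fun u hu v hv huv => hsub v ⟨hu, huv⟩ ⟨hv, mem_ball_self hr⟩⟩

/-- Gallai's theorem, coloring `z` by a `δ / 2`-ball containing `g z`. -/
theorem TotallyBounded.exists_homothetic_copy_dist_lt {M X : Type*} [AddCommMonoid M]
    [PseudoMetricSpace X] {g : M → X} (hg : TotallyBounded (range g)) (S : Finset M) {δ : ℝ}
    (hδ : 0 < δ) :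
    ∃ a > 0, ∃ b : M, ∀ s ∈ S, ∀ s' ∈ S, dist (g (a • s + b)) (g (a • s' + b)) < δ := by
  obtain ⟨t, ht, hcover⟩ := Metric.totallyBounded_iff.1 hg (δ / 2) (half_pos hδ)
  have : ∀ z, ∃ y ∈ ht.toFinset, g z ∈ ball y (δ / 2) := by
    simpa using fun z => hcover (mem_range_self z)
  choose center hcenter hball using this
  obtain ⟨a, ha, b, y, hy⟩ := Combinatorics.exists_mono_homothetic_copy S
    fun z => (⟨center z, hcenter z⟩ : ht.toFinset)
  refine ⟨a, ha, b, fun s hs s' hs' => ?_⟩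
  have h := mem_ball.1 (hball (a • s + b))
  have h' := mem_ball.1 (hball (a • s' + b))
  have hsame : center (a • s + b) = center (a • s' + b) :=
    congrArg Subtype.val ((hy s hs).trans (hy s' hs').symm)
  rw [hsame] at h
  linarith [dist_triangle_right (g (a • s + b)) (g (a • s' + b)) (center (a • s' + b))]

theorem eq_add_sum_smul_of_add_single {ι E : Type*} [Fintype ι] [DecidableEq ι]
    [AddCommMonoid E] {F : (ι → ℕ) → E} {t : ι → E} {m : ι → ℕ}
    (hF : ∀ c i, c + Pi.single i 1 ≤ m → F (c + Pi.single i 1) = F c + t i) :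
    ∀ c ≤ m, F c = F 0 + ∑ i, c i • t i := by
  intro c
  induction c using WellFoundedLT.induction with
  | _ c ih =>
  intro hc
  rcases eq_or_ne c 0 with rfl | hc0
  · simp
  obtain ⟨i, hi⟩ : ∃ i, c i ≠ 0 := by simpa [funext_iff] using hc0
  have hle : Pi.single i 1 ≤ c := fun j => by
    rcases eq_or_ne j i with rfl | h <;> simp [*, Nat.one_le_iff_ne_zero]
  set c' := c - Pi.single i 1
  have hc' : c' + Pi.single i 1 = c := tsub_add_cancel_of_le hle
  rw [← hc', hF c' i (hc'.symm ▸ hc),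
    ih c' (hc' ▸ lt_add_of_pos_right c' (Pi.single_pos.2 one_pos))
      (le_self_add.trans (hc' ▸ hc))]
  simp [add_smul, Finset.sum_add_distrib, Pi.single_apply, add_assoc]

theorem sub_eq_sub_of_dist_lt {M E : Type*} [AddCommMonoid M] [NormedAddCommGroup E]
    {S : Set E} {r : ℝ} (hS : ∀ u ∈ S, ∀ v ∈ S, dist u v < r → u = v) (φ : M →+ E)
    {f : M → E} {z w z' w' : M} (hzw : z + w' = z' + w)
    (hz : f z - f w ∈ S) (hz' : f z' - f w' ∈ S)
    (h₁ : dist (f z - φ z) (f z' - φ z') < r / 2)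
    (h₂ : dist (f w - φ w) (f w' - φ w') < r / 2) :
    f z - f w = f z' - f w' := by
  refine hS _ hz _ hz' ?_
  have hφ : φ z + φ w' = φ z' + φ w := by rw [← map_add, ← map_add, hzw]
  have : f z - f w - (f z' - f w') =
      (f z - φ z - (f z' - φ z')) - (f w - φ w - (f w' - φ w')) := by
    linear_combination (norm := abel) hφ
  rw [dist_eq_norm, this]
  rw [dist_eq_norm] at h₁ h₂
  linarith [norm_sub_le (f z - φ z - (f z' - φ z')) (f w - φ w - (f w' - φ w'))]

theorem eq_add_sum_smul_of_dist_lt {ι E : Type*} [Fintype ι] [DecidableEq ι]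
    [NormedAddCommGroup E] {Λ : Set E} {r : ℝ}
    (hΛ : ∀ u ∈ Λ - Λ, ∀ v ∈ Λ - Λ, dist u v < r → u = v) (φ : (ι → ℕ) →+ E)
    {F : (ι → ℕ) → E} {m : ι → ℕ} (hF : ∀ c ≤ m, F c ∈ Λ)
    (hclose : ∀ c ≤ m, ∀ c' ≤ m, dist (F c - φ c) (F c' - φ c') < r / 2) :
    ∀ c ≤ m, F c = F 0 + ∑ i, c i • (F (Pi.single i 1) - F 0) := by
  refine eq_add_sum_smul_of_add_single fun c i hc => eq_add_of_sub_eq' ?_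
  have hi : Pi.single i 1 ≤ m := le_add_self.trans hc
  have hc' : c ≤ m := le_self_add.trans hc
  exact sub_eq_sub_of_dist_lt hΛ φ (by rw [add_zero, add_comm])
    (sub_mem_sub (hF _ hc) (hF c hc')) (sub_mem_sub (hF _ hi) (hF 0 zero_le))
    (hclose _ hc _ hi) (hclose _ hc' _ zero_le)

theorem LinearIndependent.exists_forall_dist_smul_lt {ι E : Type*} [Fintype ι]
    [NormedAddCommGroup E] [NormedSpace ℝ E] [FiniteDimensional ℝ E] {e : ι → E}
    (he : LinearIndependent ℝ e) :
    ∃ η > 0, ∀ a : ℝ, 1 ≤ a → ∀ v : ι → E, (∀ i, dist (v i) (a • e i) < η) →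
      LinearIndependent ℝ v := by
  obtain ⟨η, hη, hball⟩ := Metric.eventually_nhds_iff.1 he.eventually
  refine ⟨η, hη, fun a ha v hv => ?_⟩
  have ha0 : 0 < a := by linarith
  have : LinearIndependent ℝ (fun i => a⁻¹ • v i) := by
    refine hball ((dist_pi_lt_iff hη).2 fun i => ?_)
    calc dist (a⁻¹ • v i) (e i) = a⁻¹ * dist (v i) (a • e i) := by
          conv_lhs => rw [← inv_smul_smul₀ ha0.ne' (e i)]
          rw [dist_smul₀, Real.norm_of_nonneg (inv_nonneg.2 ha0.le)]
      _ ≤ dist (v i) (a • e i) := mul_le_of_le_one_left dist_nonneg (inv_le_one_of_one_le₀ ha)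
      _ < η := hv i
  convert this.units_smul fun _ => Units.mk0 a ha0.ne' using 1
  funext i
  simp [Units.smul_def, smul_inv_smul₀ ha0.ne']

def latticePoint {ι : Type*} : (ι → ℕ) →+ EuclideanSpace ℝ ι :=
  AddMonoidHom.mk' (fun z => WithLp.toLp 2 fun j => (z j : ℝ)) fun _ _ => by ext; simp

lemma latticePoint_single {ι : Type*} [DecidableEq ι] (i : ι) :
    latticePoint (Pi.single i 1) = EuclideanSpace.single i 1 := by
  ext j
  rcases eq_or_ne j i with rfl | h <;> simp [latticePoint, *]

theorem exists_scaled_box_near_lattice {ι : Type*} [Fintype ι] [DecidableEq ι]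
    {Λ : Set (EuclideanSpace ℝ ι)} {R : ℝ} (hdense : ∀ x, ∃ y ∈ Λ, y ∈ ball x R)
    (m : ι → ℕ) {δ : ℝ} (hδ : 0 < δ) :
    ∃ a > 0, ∃ F : (ι → ℕ) → EuclideanSpace ℝ ι, (∀ c, F c ∈ Λ) ∧
      ∀ c ≤ m, ∀ c' ≤ m,
        dist (F c - (a • latticePoint) c) (F c' - (a • latticePoint) c') < δ := by
  choose f hfΛ hfball using fun z => hdense (latticePoint z)
  have hg : TotallyBounded (range fun z => f z - latticePoint z) :=
    (isCompact_closedBall 0 R).totallyBounded.subset <| range_subset_iff.2 fun z => by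
      simpa [dist_eq_norm] using (mem_ball.1 (hfball z)).le
  obtain ⟨a, ha, b, hab⟩ := hg.exists_homothetic_copy_dist_lt (Finset.Iic m) hδ
  refine ⟨a, ha, fun c => f (a • c + b), fun c => hfΛ _, fun c hc c' hc' => ?_⟩
  have := hab c (Finset.mem_Iic.2 hc) c' (Finset.mem_Iic.2 hc')
  rwa [map_add, map_add, ← sub_sub, ← sub_sub, dist_sub_right, map_nsmul, map_nsmul] at this

/-- every Meyer set `Λ ⊆ ℝ^d` has `aprank Λ ≥ d`: for every `N` it
contains an li-arithmetic progression of length `N` and rank `d`. -/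
theorem stmt_15 {d : ℕ} (Λ : Set (EuclideanSpace ℝ (Fin d))) (hΛ : IsMeyerSet Λ) :
    ∀ N : ℕ, HasLiAP Λ d N := by
  obtain ⟨⟨R, -, hdense⟩, hdisc⟩ := hΛ
  obtain ⟨r, hr, hsep⟩ := hdisc.exists_eq_of_dist_lt
  obtain ⟨η, hη, hli⟩ := (EuclideanSpace.orthonormal_single (𝕜 := ℝ) (ι := Fin d))
    |>.linearIndependent.exists_forall_dist_smul_lt
  intro N
  obtain ⟨a, ha, F, hFΛ, hclose⟩ :=
    exists_scaled_box_near_lattice hdense (fun _ => N + 1) (lt_min (half_pos hr) hη)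
  have hsingle : ∀ i, Pi.single i 1 ≤ fun _ : Fin d => N + 1 := fun i j => by
    rcases eq_or_ne j i with rfl | h <;> simp [*]
  refine ⟨F 0, fun i => F (Pi.single i 1) - F 0, ?_, fun c hc => ?_⟩
  · refine (hli a (by exact_mod_cast ha) _ fun i => ?_).restrict_scalars' ℤ
    calc dist (F (Pi.single i 1) - F 0) ((a : ℝ) • EuclideanSpace.single i 1)
        = dist (F (Pi.single i 1) - (a • latticePoint) (Pi.single i 1))
            (F 0 - (a • latticePoint) 0) := by
          simp only [dist_eq_norm, AddMonoidHom.smul_apply, latticePoint_single, map_zero,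
            Nat.cast_smul_eq_nsmul]
          congr 1
          abel
      _ < η := (hclose _ (hsingle i) _ zero_le).trans_le (min_le_right _ _)
  · have hgrid := eq_add_sum_smul_of_dist_lt hsep (a • latticePoint) (fun c _ => hFΛ c)
      fun c hc c' hc' => (hclose c hc c' hc').trans_le (min_le_left _ _)
    simp only [Nat.cast_smul_eq_nsmul]
    rw [← hgrid c fun i => (hc i).trans N.le_succ]
    exact hFΛ c
end

section
/- Let Λ ⊆ ℝ^d be a Meyer set and let k ∈ ℕ be such that for every N ∈ ℕ, Λ contains an li-arithmetic progression of length N and rank k (e.g., k = aprank(Λ)). Then for every r, N ∈ ℕ there exists R > 0 such that for every colouring of Λ with r colours and every y ∈ ℝ^d, the set Λ ∩ B_R(y) contains a monochromatic li-arithmetic progression of length N and rank k. -/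
open scoped Pointwise

/-!
Fix `R₀` such that every ball of radius `R₀` meets `Λ`, and take an li-progression
`s + ∑ cᵢ vᵢ`, `0 ≤ cᵢ ≤ L`, in `Λ` with `L` large. Given `χ` and `y`, move each grid point `c`
to a point `φ c ∈ Λ` within `R₀` of `y + ∑ cᵢ vᵢ`. The defects `φ c - (s + ∑ cᵢ vᵢ)` lie in
`Λ - Λ` and in one ball of radius `R₀`, so by uniform discreteness they can be labelled
injectively by `n` labels, with `n` independent of `y`. Colour the grid by the colour of `φ c`
together with the label of its defect. A finite form of Gallai's theorem (compactness applied to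
`Combinatorics.exists_mono_homothetic_copy`) gives a monochromatic copy `a • [0, N]ᵏ + b` inside
`[0, L]ᵏ`; the defect is constant on it, so `φ` maps it onto an li-progression in `Λ` with ratios
`a • vᵢ`, all of one colour, near `y`.
-/

open Filter

theorem Ultrafilter.exists_eventually_eq {α κ : Type*} [Finite κ] (U : Ultrafilter α)
    (f : α → κ) : ∃ c, ∀ᶠ x in U, f x = c :=
  U.eventually_exists_iff.1 (Eventually.of_forall fun x => ⟨f x, rfl⟩)

namespace Combinatorics

theorem exists_finset_mono_homothetic_copy {M κ : Type*} [AddCommMonoid M] [Finite κ]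
    (S : Finset M) :
    ∃ T : Finset M, ∀ C : M → κ,
      ∃ a > 0, ∃ (b : M) (c : κ), ∀ s ∈ S, a • s + b ∈ T ∧ C (a • s + b) = c := by
  classical
  by_contra! h
  choose C hC using h
  let U : Ultrafilter (Finset M) := .of atTop
  -- `Clim` is the limit along `U` of the colourings without a monochromatic copy inside `T`.
  choose Clim hClim using fun m => U.exists_eventually_eq (C · m)
  obtain ⟨a, ha, b, c, hc⟩ := exists_mono_homothetic_copy S Clim
  have hT : ∀ᶠ T in U, S.image (a • · + b) ⊆ T ∧ ∀ s ∈ S, C T (a • s + b) = Clim (a • s + b) :=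
    Eventually.and (Ultrafilter.of_le atTop (eventually_ge_atTop _))
      ((eventually_all_finset S).2 fun s _ => hClim _)
  obtain ⟨T, hST, hCT⟩ := hT.exists
  obtain ⟨s, hs, hne⟩ := hC T a ha b c
  exact hne (hST (Finset.mem_image_of_mem _ hs)) ((hCT s hs).trans (hc s hs))

theorem exists_mono_homothetic_copy_box {ι κ : Type*} [Fintype ι] [Finite κ] (N : ℕ) :
    ∃ L : ℕ, ∀ C : (ι → ℕ) → κ, ∃ a > 0, ∃ (b : ι → ℕ) (c : κ),
      ∀ q : ι → ℕ, (∀ i, q i ≤ N) → (∀ i, (a • q + b) i ≤ L) ∧ C (a • q + b) = c := by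
  classical
  obtain ⟨T, hT⟩ := exists_finset_mono_homothetic_copy (κ := κ)
    (Fintype.piFinset fun _ : ι => Finset.range (N + 1))
  refine ⟨T.sup fun p => Finset.univ.sup p, fun C => ?_⟩
  obtain ⟨a, ha, b, c, hc⟩ := hT C
  refine ⟨a, ha, b, c, fun q hq => ?_⟩
  obtain ⟨hmem, hcol⟩ := hc q (by simpa [Nat.lt_succ_iff] using hq)
  exact ⟨fun i => (Finset.le_sup (Finset.mem_univ i)).trans
    (Finset.le_sup (f := fun p => Finset.univ.sup p) hmem), hcol⟩

end Combinatorics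

theorem LinearIndependent.int_real_smul {ι E : Type*} [AddCommGroup E] [Module ℝ E]
    {v : ι → E} (hv : LinearIndependent ℤ v) {a : ℝ} (ha : a ≠ 0) :
    LinearIndependent ℤ (a • v) :=
  hv.map' (DistribSMul.toLinearMap ℤ E a) (LinearMap.ker_eq_bot.2 (smul_right_injective E ha))

section Module

variable {ι E : Type*} [Fintype ι] [AddCommGroup E] [Module ℝ E]

def apPoint (s : E) (v : ι → E) (c : ι → ℕ) : E :=
  s + ∑ i, (c i : ℝ) • v i

theorem apPoint_nsmul_add (s : E) (v : ι → E) (a : ℕ) (q b : ι → ℕ) :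
    apPoint s v (a • q + b) = apPoint (apPoint s v b) ((a : ℝ) • v) q := by
  simp only [apPoint, Pi.add_apply, Pi.smul_apply, smul_eq_mul, Nat.cast_add, Nat.cast_mul,
    add_smul, mul_comm (a : ℝ), mul_smul, Finset.sum_add_distrib]
  abel

theorem eq_apPoint_of_sub_eq {s x x₀ : E} {v : ι → E} {a : ℕ} {q b : ι → ℕ}
    (h : x - apPoint s v (a • q + b) = x₀ - apPoint s v b) :
    x = apPoint x₀ ((a : ℝ) • v) q := by
  rw [sub_eq_iff_eq_add, apPoint_nsmul_add] at h
  rw [h]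
  simp only [apPoint]
  abel

end Module

section Normed

variable {ι E : Type*} [Fintype ι] [SeminormedAddCommGroup E] [NormedSpace ℝ E]

theorem dist_sub_apPoint (x s y : E) (v : ι → E) (c : ι → ℕ) :
    dist (x - apPoint s v c) (y - s) = dist x (apPoint y v c) := by
  simp only [dist_eq_norm, apPoint]
  congr 1
  abel

theorem dist_apPoint_le (s : E) (v : ι → E) {c : ι → ℕ} {L : ℕ} (hc : ∀ i, c i ≤ L) :
    dist (apPoint s v c) s ≤ L * ∑ i, ‖v i‖ := by
  rw [dist_eq_norm, apPoint, add_sub_cancel_left, Finset.mul_sum]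
  refine (norm_sum_le _ _).trans (Finset.sum_le_sum fun i _ => ?_)
  rw [norm_smul, Real.norm_natCast]
  gcongr
  exact hc i

end Normed

open Metric

theorem UniformlyDiscrete.exists_injOn_closedBall {d : ℕ} {S : Set (EuclideanSpace ℝ (Fin d))}
    (hS : UniformlyDiscrete S) {R : ℝ} (hR : 0 ≤ R) :
    ∃ n : ℕ, ∀ z, ∃ label : EuclideanSpace ℝ (Fin d) → Fin n,
      (S ∩ closedBall z R).InjOn label := by
  obtain ⟨ε, hε, hS⟩ := hS
  obtain ⟨t, ht⟩ := (isCompact_closedBall (0 : EuclideanSpace ℝ (Fin d)) R).elim_finite_subcover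
    (fun p => ball p ε) (fun _ => isOpen_ball) (fun x _ => Set.mem_iUnion.2 ⟨x, mem_ball_self hε⟩)
  refine ⟨t.card, fun z => ?_⟩
  have hlabel : ∀ w, ∃ p : t, w ∈ closedBall z R → w ∈ ball (z + p) ε := by
    intro w
    by_cases hw : w ∈ closedBall z R
    · have : w - z ∈ closedBall 0 R := by simpa [dist_eq_norm] using hw
      obtain ⟨p, hp, hwp⟩ := Set.mem_iUnion₂.1 (ht this)
      exact ⟨⟨p, hp⟩, fun _ => by simpa [dist_eq_norm, sub_sub] using hwp⟩
    · obtain ⟨p, hp, -⟩ := Set.mem_iUnion₂.1 (ht (mem_closedBall_self hR))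
      exact ⟨⟨p, hp⟩, fun h => absurd h hw⟩
  choose label hlabel using hlabel
  refine ⟨t.equivFin ∘ label, fun w hw w' hw' hww' => ?_⟩
  have hp : label w = label w' := t.equivFin.injective hww'
  exact hS (z + label w) ⟨hw.1, hlabel w hw.2⟩ ⟨hw'.1, hp ▸ hlabel w' hw'.2⟩

/-- let `Λ ⊆ ℝ^d` be a Meyer set and `k ∈ ℕ` be such that `Λ`
contains li-arithmetic progressions of rank `k` and every length (e.g. `k = aprank Λ`).
Then for every `r, N` there is `R > 0` such that for every colouring of `Λ` with `r`
colours and every `y ∈ ℝ^d`, the set `Λ ∩ B_R(y)` contains a monochromatic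
li-arithmetic progression of length `N` and rank `k`. -/
theorem stmt_16 {d : ℕ} (Λ : Set (EuclideanSpace ℝ (Fin d))) (hΛ : IsMeyerSet Λ)
    (k : ℕ) (hk : ∀ N : ℕ, HasLiAP Λ k N) (r N : ℕ) :
    ∃ R > (0 : ℝ), ∀ χ : EuclideanSpace ℝ (Fin d) → Fin r,
      ∀ y : EuclideanSpace ℝ (Fin d),
      ∃ (s : EuclideanSpace ℝ (Fin d)) (v : Fin k → EuclideanSpace ℝ (Fin d)),
        LinearIndependent ℤ v ∧
        (∀ c : Fin k → ℕ, (∀ i, c i ≤ N) →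
          s + ∑ i, (c i : ℝ) • v i ∈ Λ ∩ Metric.ball y R) ∧
        ∃ col : Fin r, ∀ c : Fin k → ℕ, (∀ i, c i ≤ N) →
          χ (s + ∑ i, (c i : ℝ) • v i) = col := by
  obtain ⟨R₀, hR₀, hdense⟩ := hΛ.1
  obtain ⟨n, hlabel⟩ := hΛ.2.exists_injOn_closedBall hR₀.le
  obtain ⟨L, hL⟩ :=
    Combinatorics.exists_mono_homothetic_copy_box (ι := Fin k) (κ := Fin r × Fin n) N
  obtain ⟨s, v, hv, hsv⟩ := hk L
  refine ⟨R₀ + L * ∑ i, ‖v i‖ + 1, by positivity, fun χ y => ?_⟩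
  choose φ hφΛ hφ using fun c => hdense (apPoint y v c)
  obtain ⟨label, hinj⟩ := hlabel (y - s)
  have hdefect : ∀ c : Fin k → ℕ, (∀ i, c i ≤ L) →
      φ c - apPoint s v c ∈ (Λ - Λ) ∩ closedBall (y - s) R₀ := fun c hc =>
    ⟨Set.sub_mem_sub (hφΛ c) (hsv c hc), (dist_sub_apPoint _ _ _ v c).trans_le (hφ c).le⟩
  obtain ⟨a, ha, b, col, hab⟩ := hL fun c => (χ (φ c), label (φ c - apPoint s v c))
  obtain ⟨hb, hbcol⟩ : (∀ i, b i ≤ L) ∧ _ := by simpa using hab 0 fun _ => Nat.zero_le N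
  have hφab : ∀ q : Fin k → ℕ, (∀ i, q i ≤ N) → φ (a • q + b) = apPoint (φ b) ((a : ℝ) • v) q :=
    fun q hq => eq_apPoint_of_sub_eq <| hinj (hdefect _ (hab q hq).1) (hdefect b hb)
      (congrArg Prod.snd ((hab q hq).2.trans hbcol.symm))
  refine ⟨φ b, (a : ℝ) • v, hv.int_real_smul (by positivity), fun q hq => ?_, col.1,
    fun q hq => ?_⟩
  · show apPoint (φ b) ((a : ℝ) • v) q ∈ _
    rw [← hφab q hq]
    refine ⟨hφΛ _, mem_ball.2 ?_⟩
    have := dist_triangle (φ (a • q + b)) (apPoint y v (a • q + b)) y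
    linarith [mem_ball.1 (hφ (a • q + b)), dist_apPoint_le y v (hab q hq).1]
  · show χ (apPoint (φ b) ((a : ℝ) • v) q) = col.1
    rw [← hφab q hq]
    exact congrArg Prod.fst (hab q hq).2
end

section
/- Let Λ ⊆ ℝ^d be a fully Euclidean Meyer set with rank(Λ) = k. Then: (a) if s, r₁, …, rₙ ∈ ℝ^d with r₁, …, rₙ linearly independent over ℤ satisfy s + ∑_{i=1}^{n} cᵢrᵢ ∈ Λ for all integers 0 ≤ cᵢ ≤ N for some N ≥ 1, then n ≤ k; and (b) for each N ∈ ℕ there exist s ∈ ℝ^d and r₁, …, r_k ∈ ℝ^d linearly independent over ℤ such that s + ∑_{i=1}^{k} cᵢrᵢ ∈ Λ for all integers 0 ≤ cᵢ ≤ N. -/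
open scoped Pointwise

/-!
Since `Λ ⊆ Λ(W)`, the group `span ℤ Λ` lies in the first projection of `ℒ`, a lattice of rank
`d + m`; so `k ≤ d + m`. A progression `s + ∑ cᵢ rᵢ ⊆ Λ` with `N ≥ 1` contains `s` and every
`s + rᵢ`, so its ratios are independent elements of `span ℤ Λ`, which gives (a).

For (b) it suffices to find, for every `N`, a progression of rank `d + m` in `Λ`; then (a) forces
`k = d + m`. Density of `π₂(ℒ)` yields ℤ-independent `r₁, …, r_{d+m} ∈ ℒ` with internal parts
as small as we like, so the lattice points `∑ cᵢ rᵢ` with `c` in any prescribed finite set `T`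
have internal part at most `1`. Relative density moves each of them into `Λ` by a lattice
vector from a finite set (bounded in both coordinates since `W` is bounded and `ℒ` is discrete).
Colouring `c` by that vector, the finitary Gallai theorem (from Hales–Jewett) gives a
monochromatic homothetic copy `a • {0, …, N}^{d+m} + b ⊆ T`, i.e. the progression with start
`(∑ bᵢ rᵢ + g).1` and ratios `(a • rᵢ).1`, independent because `π₁` is injective on `ℒ`.
-/

open Finset Submodule Module

theorem Combinatorics.exists_finset_mono_homothetic_copy_s18 {M κ : Type*} [AddCommMonoid M]
    (S : Finset M) [Finite κ] :
    ∃ T : Finset M, ∀ C : M → κ, ∃ a > 0, ∃ (b : M) (c : κ),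
      ∀ s ∈ S, a • s + b ∈ T ∧ C (a • s + b) = c := by
  classical
  obtain ⟨ι, _, hι⟩ := Line.exists_mono_in_high_dimension S κ
  have := Fintype.ofFinite ι
  refine ⟨univ.image fun v : ι → S => ∑ i, (v i : M), fun C => ?_⟩
  obtain ⟨l, c, hl⟩ := hι fun v => C (∑ i, (v i : M))
  set s : Finset ι := {i | l.idxFun i = none}
  set b : M := ∑ i ∈ sᶜ, ((l.idxFun i).map (↑)).getD 0
  have hline : ∀ x : S, ∑ i, (l x i : M) = #s • (x : M) + b := by
    intro x
    rw [← Finset.sum_add_sum_compl s, ← Finset.sum_const]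
    congr 1
    · refine Finset.sum_congr rfl fun i hi => ?_
      rw [l.apply_none _ _ (Finset.mem_filter.mp hi).2]
    · refine Finset.sum_congr rfl fun i hi => ?_
      obtain ⟨y, hy⟩ := Option.ne_none_iff_exists.mp (by simpa [s] using hi)
      simp [← hy]
  have hs : 0 < #s := Finset.card_pos.mpr ⟨_, by simpa [s] using l.proper.choose_spec⟩
  refine ⟨#s, hs, b, c, fun x hx => ?_⟩
  rw [← hline ⟨x, hx⟩]
  exact ⟨mem_image_of_mem _ (mem_univ _), hl ⟨x, hx⟩⟩

theorem LinearIndependent.const_smul {ι R M : Type*} [Ring R] [NoZeroDivisors R]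
    [AddCommGroup M] [Module R M] {v : ι → M} (hv : LinearIndependent R v) {a : R}
    (ha : a ≠ 0) : LinearIndependent R (a • v) := by
  rw [linearIndependent_iff'] at hv ⊢
  intro s g hg i hi
  have := hv s (fun i => g i * a) (by simpa [mul_smul] using hg) i hi
  exact (mul_eq_zero.mp this).resolve_right ha

theorem LinearIndependent.fst_of_injOn {ι E F : Type*} [AddCommGroup E] [AddCommGroup F]
    {L : AddSubgroup (E × F)} (hinj : ∀ p ∈ L, ∀ q ∈ L, p.1 = q.1 → p = q)
    {r : ι → E × F} (hrL : ∀ i, r i ∈ L) (hr : LinearIndependent ℤ r) :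
    LinearIndependent ℤ fun i => (r i).1 := by
  refine hr.map (f := LinearMap.fst ℤ E F) (Submodule.disjoint_def.mpr fun v hv hv0 => ?_)
  have hvL : v ∈ L.toIntSubmodule :=
    span_le.mpr (Set.range_subset_iff.mpr hrL) hv
  exact hinj v hvL 0 L.zero_mem hv0

theorem exists_linearIndependent_fin_finrank {K V : Type*} [DivisionRing K] [AddCommGroup V]
    [Module K V] [FiniteDimensional K V] {S : Set V} (hS : span K S = ⊤) :
    ∃ r : Fin (finrank K V) → V, (∀ i, r i ∈ S) ∧ LinearIndependent K r := by
  obtain ⟨b, hbS, hb, hli⟩ := exists_linearIndependent K S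
  let B₀ := Basis.mk hli (by rw [Subtype.range_coe, hb, hS])
  let B := B₀.reindex (B₀.indexEquiv (finBasis K V))
  exact ⟨B, fun i => by simpa [B, B₀] using hbS (Subtype.prop _), B.linearIndependent⟩

theorem span_eq_top_of_forall_sub_mem {V : Type*} [NormedAddCommGroup V] [NormedSpace ℝ V]
    [FiniteDimensional ℝ V] (L : AddSubgroup V) {K : Set V} (hK : IsCompact K)
    (hKL : ∀ x, ∃ l ∈ L, x - l ∈ K) : span ℝ (L : Set V) = ⊤ := by
  by_contra hne
  obtain ⟨f, hf0, hLf⟩ := (span ℝ (L : Set V)).exists_le_ker_of_lt_top (lt_top_iff_ne_top.mpr hne)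
  obtain ⟨C, hC⟩ := hK.bddAbove_image (LinearMap.continuous_of_finiteDimensional f).continuousOn
  obtain ⟨x, hx⟩ : ∃ x, f x ≠ 0 := by simpa [LinearMap.ext_iff] using hf0
  obtain ⟨l, hl, hxl⟩ := hKL (((C + 1) / f x) • x)
  have : f (((C + 1) / f x) • x - l) = C + 1 := by
    rw [map_sub, hLf (subset_span hl), sub_zero, map_smul, smul_eq_mul, div_mul_cancel₀ _ hx]
  linarith [hC ⟨_, hxl, this⟩]

theorem AddSubgroup.closure_inter_eq_of_dense {G : Type*} [AddGroup G] [TopologicalSpace G]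
    [IsTopologicalAddGroup G] [ConnectedSpace G] {D : AddSubgroup G} (hD : Dense (D : Set G))
    {U : Set G} (hU : IsOpen U) (hU0 : (0 : G) ∈ U) :
    AddSubgroup.closure ((D : Set G) ∩ U) = D := by
  set H := AddSubgroup.closure ((D : Set G) ∩ U)
  have hHD : H ≤ D := (AddSubgroup.closure_le D).mpr Set.inter_subset_left
  have hU_sub : U ⊆ H.topologicalClosure :=
    (Set.inter_comm _ _ ▸ hD.open_subset_closure_inter hU).trans
      (_root_.closure_mono AddSubgroup.subset_closure)
  -- The closure of `H` is a subgroup containing the neighbourhood `U` of `0`, hence clopen.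
  have hopen : IsOpen (H.topologicalClosure : Set G) :=
    H.topologicalClosure.isOpen_of_mem_nhds (Filter.mem_of_superset (hU.mem_nhds hU0) hU_sub)
  have hdense : _root_.closure (H : Set G) = Set.univ :=
    (isClopen_iff.mp ⟨H.topologicalClosure.isClosed_of_isOpen hopen, hopen⟩).resolve_left
      (Set.nonempty_iff_ne_empty.mp ⟨0, H.topologicalClosure.zero_mem⟩)
  refine le_antisymm hHD fun p hp => ?_
  -- `p - U` is a neighbourhood of `p`, so it meets the dense subgroup `H`.
  obtain ⟨h, hpU, hH⟩ := mem_closure_iff.mp (hdense ▸ Set.mem_univ p) {x | p - x ∈ U}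
    (hU.preimage (continuous_const.sub continuous_id)) (by simpa using hU0)
  have : p - h ∈ H := AddSubgroup.subset_closure ⟨D.sub_mem hp (hHD hH), hpU⟩
  simpa using H.add_mem this hH

theorem subset_span_setOf_norm_snd_lt {E F : Type*} [NormedAddCommGroup E] [NormedSpace ℝ E]
    [NormedAddCommGroup F] [NormedSpace ℝ F] (L : AddSubgroup (E × F))
    (hL : Dense (Prod.snd '' (L : Set (E × F)))) {ε : ℝ} (hε : 0 < ε) :
    (L : Set (E × F)) ⊆ span ℝ {v | v ∈ L ∧ ‖v.2‖ < ε} := by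
  set S := span ℝ {v : E × F | v ∈ L ∧ ‖v.2‖ < ε}
  set H : AddSubgroup (E × F) := L ⊓ S.toAddSubgroup
  have hD : L.map (AddMonoidHom.snd E F) ≤ H.map (AddMonoidHom.snd E F) := by
    rw [← AddSubgroup.closure_inter_eq_of_dense (D := L.map (AddMonoidHom.snd E F))
      (U := Metric.ball 0 ε) (by simpa using hL) Metric.isOpen_ball (Metric.mem_ball_self hε),
      AddSubgroup.closure_le]
    rintro _ ⟨⟨v, hv, rfl⟩, hvε⟩
    exact ⟨v, ⟨hv, subset_span ⟨hv, by simpa using hvε⟩⟩, rfl⟩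
  intro l hl
  obtain ⟨v, ⟨hvL, hvS⟩, hv⟩ := hD ⟨l, hl, rfl⟩
  have hlv : l - v ∈ S := subset_span ⟨L.sub_mem hl hvL, by simp_all⟩
  simpa using S.add_mem hlv hvS

theorem card_le_finrank_span_of_progression {ι E : Type*} [Fintype ι] [AddCommGroup E] [Module ℝ E]
    {Λ : Set E} [Module.Finite ℤ (span ℤ Λ)] {N : ℕ} (hN : 1 ≤ N) {s : E} {r : ι → E}
    (hr : LinearIndependent ℤ r)
    (hΛ : ∀ c : ι → ℕ, (∀ i, c i ≤ N) → s + ∑ i, (c i : ℝ) • r i ∈ Λ) :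
    Fintype.card ι ≤ finrank ℤ (span ℤ Λ) := by
  classical
  have hs : s ∈ Λ := by simpa using hΛ 0 (by simp)
  have hr' : ∀ i, r i ∈ span ℤ Λ := fun i => by
    have := hΛ (Pi.single i 1) fun j => by by_cases h : j = i <;> simp [h, hN]
    simpa [Pi.single_apply] using sub_mem (subset_span this) (subset_span hs)
  exact (LinearIndependent.of_comp (span ℤ Λ).subtype
    (v := fun i => (⟨r i, hr' i⟩ : span ℤ Λ)) hr).fintype_card_le_finrank

theorem span_int_le_map_fst_of_subset_cutProject {E F : Type*} [AddCommGroup E]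
    [AddCommGroup F] {L : AddSubgroup (E × F)} {Λ : Set E} {W : Set F} (hΛW : Λ ⊆ cutProject L W) :
    span ℤ Λ ≤ L.toIntSubmodule.map (LinearMap.fst ℤ E F) :=
  span_le.mpr fun x hx => by
    obtain ⟨y, -, hxy⟩ := hΛW hx
    exact ⟨(x, y), hxy, rfl⟩

section CutProject

variable {E F : Type*} [NormedAddCommGroup E] [NormedSpace ℝ E] [FiniteDimensional ℝ E]
  [NormedAddCommGroup F] [NormedSpace ℝ F] [FiniteDimensional ℝ F]

theorem finite_span_int_of_subset_cutProject {L : AddSubgroup (E × F)} [DiscreteTopology L]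
    (hspan : span ℝ (L : Set (E × F)) = ⊤) {Λ : Set E} {W : Set F}
    (hΛW : Λ ⊆ cutProject L W) : Module.Finite ℤ (span ℤ Λ) := by
  have : DiscreteTopology L.toIntSubmodule := ‹DiscreteTopology L›
  have : IsZLattice ℝ L.toIntSubmodule := ⟨hspan⟩
  have := Module.Finite.map L.toIntSubmodule (LinearMap.fst ℤ E F)
  exact Module.Finite.of_injective (Submodule.inclusion
    (span_int_le_map_fst_of_subset_cutProject hΛW)) (Submodule.inclusion_injective _)

theorem finrank_span_int_le_of_subset_cutProject {L : AddSubgroup (E × F)} [DiscreteTopology L]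
    (hspan : span ℝ (L : Set (E × F)) = ⊤) {Λ : Set E} {W : Set F}
    (hΛW : Λ ⊆ cutProject L W) : finrank ℤ (span ℤ Λ) ≤ finrank ℝ (E × F) := by
  have : DiscreteTopology L.toIntSubmodule := ‹DiscreteTopology L›
  have : IsZLattice ℝ L.toIntSubmodule := ⟨hspan⟩
  have := Module.Finite.map L.toIntSubmodule (LinearMap.fst ℤ E F)
  calc finrank ℤ (span ℤ Λ)
      ≤ finrank ℤ (L.toIntSubmodule.map (LinearMap.fst ℤ E F)) :=
        Submodule.finrank_mono (span_int_le_map_fst_of_subset_cutProject hΛW)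
    _ ≤ finrank ℤ L.toIntSubmodule := Submodule.finrank_map_le _ _
    _ = finrank ℝ (E × F) := ZLattice.rank ℝ _

theorem exists_linearIndependent_norm_snd_lt {L : AddSubgroup (E × F)}
    (hspan : span ℝ (L : Set (E × F)) = ⊤) (hL : Dense (Prod.snd '' (L : Set (E × F))))
    {ε : ℝ} (hε : 0 < ε) :
    ∃ r : Fin (finrank ℝ (E × F)) → E × F,
      (∀ i, r i ∈ L ∧ ‖(r i).2‖ < ε) ∧ LinearIndependent ℤ r := by
  have : span ℝ {v : E × F | v ∈ L ∧ ‖v.2‖ < ε} = ⊤ :=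
    eq_top_iff.mpr (hspan ▸ span_le.mpr (subset_span_setOf_norm_snd_lt L hL hε))
  obtain ⟨r, hr, hli⟩ := exists_linearIndependent_fin_finrank this
  exact ⟨r, hr, hli.restrict_scalars' ℤ⟩

end CutProject

theorem exists_add_mem_closedBall_fst_mem {E F : Type*} [SeminormedAddCommGroup E]
    [SeminormedAddCommGroup F] {L : AddSubgroup (E × F)} {Λ : Set E} {W : Set F} {R C : ℝ}
    (hR : ∀ x : E, ∃ y ∈ Λ, y ∈ Metric.ball x R) (hW : W ⊆ Metric.closedBall 0 C)
    (hΛW : Λ ⊆ cutProject L W) {p : E × F} (hp : p ∈ L) (hp₂ : ‖p.2‖ ≤ 1) :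
    ∃ v ∈ Metric.closedBall 0 (max R (C + 1)) ∩ L, (p + v).1 ∈ Λ := by
  obtain ⟨x, hxΛ, hx⟩ := hR p.1
  obtain ⟨y, hyW, hxy⟩ := hΛW hxΛ
  refine ⟨(x, y) - p, ⟨?_, L.sub_mem hxy hp⟩, by simpa using hxΛ⟩
  have hy : ‖y - p.2‖ ≤ C + 1 := by
    have := mem_closedBall_zero_iff.mp (hW hyW)
    linarith [norm_sub_le y p.2]
  rw [mem_closedBall_zero_iff, Prod.norm_def]
  exact max_le_max (by simpa [dist_eq_norm] using (Metric.mem_ball.mp hx).le) hy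

theorem hasLiAP_finrank_of_subset_cutProject {d : ℕ} {F : Type*} [NormedAddCommGroup F]
    [NormedSpace ℝ F] [FiniteDimensional ℝ F] {Λ : Set (EuclideanSpace ℝ (Fin d))}
    (hΛ : RelativelyDense Λ) {L : AddSubgroup (EuclideanSpace ℝ (Fin d) × F)}
    [DiscreteTopology L] (hspan : span ℝ (L : Set (EuclideanSpace ℝ (Fin d) × F)) = ⊤)
    (hinj : ∀ p ∈ L, ∀ q ∈ L, p.1 = q.1 → p = q)
    (hdense : Dense (Prod.snd '' (L : Set (EuclideanSpace ℝ (Fin d) × F))))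
    {W : Set F} (hW : Bornology.IsBounded W) (hΛW : Λ ⊆ cutProject L W) (N : ℕ) :
    HasLiAP Λ (finrank ℝ (EuclideanSpace ℝ (Fin d) × F)) N := by
  classical
  obtain ⟨R, hR0, hR⟩ := hΛ
  obtain ⟨C, hC⟩ := hW.subset_closedBall 0
  set P := Metric.closedBall 0 (max R (C + 1)) ∩ (L : Set (EuclideanSpace ℝ (Fin d) × F))
  have : Finite P := (Metric.finite_isBounded_inter_isClosed DiscreteTopology.isDiscrete
    Metric.isBounded_closedBall L.isClosed_of_discrete).to_subtype
  obtain ⟨T, hT⟩ := Combinatorics.exists_finset_mono_homothetic_copy_s18 (κ := P)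
    (Fintype.piFinset fun _ : Fin (finrank ℝ (EuclideanSpace ℝ (Fin d) × F)) => range (N + 1))
  -- `T` depends only on `N` and the colours, so the ratios `r` can be made small relative to it.
  set B := T.sup fun c => ∑ i, c i
  obtain ⟨r, hr, hli⟩ := exists_linearIndependent_norm_snd_lt hspan hdense
    (ε := 1 / (B + 1)) (by positivity)
  set ψ := Fintype.linearCombination ℕ r
  have hψL : ∀ c, ψ c ∈ L := fun c => by
    simp only [ψ, Fintype.linearCombination_apply]
    exact L.sum_mem fun i _ => L.nsmul_mem (hr i).1 _
  have hψT : ∀ c ∈ T, ‖(ψ c).2‖ ≤ 1 := fun c hc => calc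
    ‖(ψ c).2‖ = ‖∑ i, c i • (r i).2‖ := by simp [ψ, Fintype.linearCombination_apply, Prod.snd_sum]
    _ ≤ ∑ i, (c i : ℝ) * (1 / (B + 1)) := (norm_sum_le _ _).trans <| sum_le_sum fun i _ =>
        norm_nsmul_le.trans (mul_le_mul_of_nonneg_left (hr i).2.le (Nat.cast_nonneg _))
    _ ≤ (B : ℝ) * (1 / (B + 1)) := by
        rw [← sum_mul]
        gcongr
        exact_mod_cast le_sup (f := fun c => ∑ i, c i) hc
    _ ≤ 1 := by
        rw [mul_one_div, div_le_one (by positivity)]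
        linarith
  have hcol : ∀ c, ∃ v : P, c ∈ T → (ψ c + v).1 ∈ Λ := fun c => by
    by_cases hc : c ∈ T
    · obtain ⟨v, hvP, hv⟩ := exists_add_mem_closedBall_fst_mem hR hC hΛW (hψL c) (hψT c hc)
      exact ⟨⟨v, hvP⟩, fun _ => hv⟩
    · exact ⟨⟨0, by simp [hR0.le], L.zero_mem⟩, fun h => absurd h hc⟩
  choose col hcol using hcol
  obtain ⟨a, ha, b, g, hg⟩ := hT col
  refine ⟨(ψ b + g).1, fun i => ((a : ℤ) • r i).1,
    (hli.const_smul (by exact_mod_cast ha.ne')).fst_of_injOn hinj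
      fun i => L.zsmul_mem (hr i).1 _, fun c hc => ?_⟩
  obtain ⟨hcT, hcg⟩ := hg c (by simpa [Nat.lt_succ_iff] using hc)
  convert hcol _ hcT using 1
  rw [hcg, map_add, map_nsmul]
  simp only [ψ, Fintype.linearCombination_apply, Prod.fst_add, Prod.fst_sum, Prod.smul_fst,
    smul_sum, Nat.cast_smul_eq_nsmul, smul_comm a]
  abel

/-- let `Λ ⊆ ℝ^d` be a fully Euclidean Meyer set (a Meyer set
contained in some fully Euclidean model set) of rank `k`. Then: (a) any
li-arithmetic progression of length `N ≥ 1` contained in `Λ` has rank `n ≤ k`;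
and (b) for each `N`, `Λ` contains an li-arithmetic progression of length `N`
and rank `k`. -/
theorem stmt_18 {d : ℕ} (Λ : Set (EuclideanSpace ℝ (Fin d))) (hΛ : IsMeyerSet Λ)
    (hfe : ∃ (m : ℕ)
        (L : AddSubgroup (EuclideanSpace ℝ (Fin d) × EuclideanSpace ℝ (Fin m))),
        IsCPS d m L ∧ ∃ W : Set (EuclideanSpace ℝ (Fin m)),
          IsCompact (closure W) ∧ (interior W).Nonempty ∧ Λ ⊆ cutProject L W)
    (k : ℕ) (hk : k = Module.finrank ℤ (Submodule.span ℤ Λ)) :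
    (∀ (n N : ℕ), 1 ≤ N → ∀ (s : EuclideanSpace ℝ (Fin d))
        (r : Fin n → EuclideanSpace ℝ (Fin d)), LinearIndependent ℤ r →
        (∀ c : Fin n → ℕ, (∀ i, c i ≤ N) → s + ∑ i, (c i : ℝ) • r i ∈ Λ) →
        n ≤ k) ∧
    (∀ N : ℕ, HasLiAP Λ k N) := by
  obtain ⟨m, L, ⟨⟨hdisc, K, hK, hKL⟩, hinj, hdense⟩, W, hW, -, hΛW⟩ := hfe
  have hspan := span_eq_top_of_forall_sub_mem L hK hKL
  have := finite_span_int_of_subset_cutProject hspan hΛW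
  have hle_k : ∀ (n N : ℕ), 1 ≤ N → ∀ (s : EuclideanSpace ℝ (Fin d))
      (r : Fin n → EuclideanSpace ℝ (Fin d)), LinearIndependent ℤ r →
      (∀ c : Fin n → ℕ, (∀ i, c i ≤ N) → s + ∑ i, (c i : ℝ) • r i ∈ Λ) → n ≤ k :=
    fun n N hN s r hr hΛr => by simpa [hk] using card_le_finrank_span_of_progression hN hr hΛr
  have hprog := hasLiAP_finrank_of_subset_cutProject hΛ.1 hspan hinj hdense
    (hW.isBounded.subset subset_closure) hΛW
  have hk_eq : k = finrank ℝ (EuclideanSpace ℝ (Fin d) × EuclideanSpace ℝ (Fin m)) := by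
    obtain ⟨s, r, hr, hΛr⟩ := hprog 1
    exact le_antisymm (hk ▸ finrank_span_int_le_of_subset_cutProject hspan hΛW)
      (hle_k _ 1 le_rfl s r hr hΛr)
  exact ⟨hle_k, hk_eq ▸ hprog⟩
end

section
/- Let Λ ⊆ ℝ^d be relatively dense and suppose Λ = Λ₁ ∪ … ∪ Λ_l is a union of finitely many subsets. Then the set Γ := ⋃_{j=1}^{l} (Λ_j − Λ_j) is relatively dense in ℝ^d. -/
/-!
Choose one point `x_j` in each nonempty `Λ_j`. Every `y ∈ Λ_j` is `(y - x_j) + x_j`, so `Λ` lies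
in `Γ + F` for the finite set `F = {x_j}`; translating by the bounded set `F` moves points by at
most `max ‖x_j‖`, so `Γ` is relatively dense with radius enlarged by that amount.
-/

open scoped Pointwise

theorem Set.exists_finite_iUnion_subset_iUnion_sub_add {G ι : Type*} [AddGroup G] [Finite ι]
    (s : ι → Set G) : ∃ F : Set G, F.Finite ∧ ⋃ j, s j ⊆ (⋃ j, (s j - s j)) + F := by
  have hchoice : ∀ j, ∃ x, (s j).Nonempty → x ∈ s j := fun j => by
    by_cases h : (s j).Nonempty
    · exact ⟨h.some, fun _ => h.some_mem⟩
    · exact ⟨0, fun h' => (h h').elim⟩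
  choose x hx using hchoice
  refine ⟨Set.range x, Set.finite_range x, fun y hy => ?_⟩
  obtain ⟨j, hyj⟩ := Set.mem_iUnion.1 hy
  have hdiff : y - x j ∈ ⋃ j, (s j - s j) :=
    Set.mem_iUnion.2 ⟨j, Set.sub_mem_sub hyj (hx j ⟨y, hyj⟩)⟩
  simpa using Set.add_mem_add hdiff (Set.mem_range_self (f := x) j)

theorem RelativelyDense.of_subset_add {d : ℕ} {Λ Γ F : Set (EuclideanSpace ℝ (Fin d))}
    (hΛ : RelativelyDense Λ) (hF : Bornology.IsBounded F) (hsub : Λ ⊆ Γ + F) :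
    RelativelyDense Γ := by
  obtain ⟨R, hR, hdense⟩ := hΛ
  obtain ⟨C, hC, hFC⟩ := hF.exists_pos_norm_le
  refine ⟨R + C, by positivity, fun x => ?_⟩
  obtain ⟨y, hyΛ, hyx⟩ := hdense x
  obtain ⟨g, hg, f, hf, rfl⟩ := hsub hyΛ
  refine ⟨g, hg, ?_⟩
  rw [Metric.mem_ball] at hyx ⊢
  calc dist g x ≤ dist g (g + f) + dist (g + f) x := dist_triangle _ _ _
    _ = ‖f‖ + dist (g + f) x := by rw [dist_self_add_right]
    _ < R + C := by linarith [hFC f hf]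

/-- if `Λ ⊆ ℝ^d` is relatively dense and `Λ = Λ₁ ∪ ⋯ ∪ Λ_l`, then
`Γ = ⋃ⱼ (Λⱼ - Λⱼ)` is relatively dense in `ℝ^d`. -/
theorem stmt_19 {d l : ℕ} (Λ : Set (EuclideanSpace ℝ (Fin d)))
    (hΛ : RelativelyDense Λ)
    (Λs : Fin l → Set (EuclideanSpace ℝ (Fin d))) (hcover : Λ = ⋃ j, Λs j) :
    RelativelyDense (⋃ j, (Λs j - Λs j)) := by
  obtain ⟨F, hF, hsub⟩ := Set.exists_finite_iUnion_subset_iUnion_sub_add Λs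
  exact hΛ.of_subset_add hF.isBounded (hcover ▸ hsub)
end
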